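/- arXiv:2206.05685 — 8 statements merged into one kernel-verified Lean document; each statement's English description precedes it below -/
import Mathlib

section
/- Let f, g : ℝ² × ℝ → ℂ be 𝕃-periodic in their first variable, with the integral defining ((f,g))_d^{+−} absolutely convergent, let d > 0, and define W(X) := e^{−i(JK)·X} ((f,g))_d^{+−}(X). Then for every R_M = m₁ a_{1,M} + m₂ a_{2,M} ∈ 𝕃_M (m₁, m₂ ∈ ℤ) and every X ∈ ℝ²: W(X − R_M) = e^{i q₁·R_M} W(X) = ω^{m₁+m₂} W(X), where q₁ := JK and ω := e^{2πi/3}; in particular W is 3𝕃_M-periodic: W(X − 3R_M) = W(X) for all R_M ∈ 𝕃_M. -/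
/-!
Since `J² = -1`, replacing `X` by `X - J R` moves the `f`-layer by `-R/2` and the `g`-layer by
`+R/2`. Translating the integration variable `x` by `-R/2` (the `x`-integrand is `𝕃`-periodic and
`Ω` is a fundamental domain, so its integral is translation invariant) and then using
`𝕃`-periodicity of `g` shows that `((f,g))_d^{+-}` is `𝕃_M`-periodic. The phase `e^{-i q₁·X}` then
contributes `e^{i q₁·R_M}`, and `q₁·J aⱼ = K·aⱼ = 2π/3` turns this into `ω^{m₁+m₂}`; `ω³ = 1`.
-/

noncomputable section

open MeasureTheory Real Complex

abbrev Pt : Type := ℝ × ℝ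

/-- Euclidean dot product on ℝ². -/
def dot (v w : Pt) : ℝ := v.1 * w.1 + v.2 * w.2

/-- The matrix J acting by J(x₁,x₂) = (x₂, −x₁). -/
def Jmat (v : Pt) : Pt := (v.2, -v.1)

/-- Rotation of ℝ² by angle θ. -/
def rotA (θ : ℝ) (v : Pt) : Pt :=
  (Real.cos θ * v.1 - Real.sin θ * v.2, Real.sin θ * v.1 + Real.cos θ * v.2)

/-- Lattice vector a₁ = a₀(1/2, −√3/2). -/
def av1 (a0 : ℝ) : Pt := (a0 / 2, -(Real.sqrt 3 * a0 / 2))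

/-- Lattice vector a₂ = a₀(1/2, √3/2). -/
def av2 (a0 : ℝ) : Pt := (a0 / 2, Real.sqrt 3 * a0 / 2)

/-- The graphene lattice 𝕃 = ℤa₁ + ℤa₂. -/
def lat (a0 : ℝ) : AddSubgroup Pt := AddSubgroup.closure {av1 a0, av2 a0}

/-- The moiré lattice 𝕃_M = J𝕃. -/
def latM (a0 : ℝ) : AddSubgroup Pt := AddSubgroup.closure {Jmat (av1 a0), Jmat (av2 a0)}

/-- Dual basis vector a₁*. -/
def as1 (a0 : ℝ) : Pt := (2 * π / a0, -(2 * π / (Real.sqrt 3 * a0)))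

/-- Dual basis vector a₂*. -/
def as2 (a0 : ℝ) : Pt := (2 * π / a0, 2 * π / (Real.sqrt 3 * a0))

/-- The Dirac point K = (a₁* + a₂*)/3. -/
def Kpt (a0 : ℝ) : Pt := (3 : ℝ)⁻¹ • (as1 a0 + as2 a0)

/-- A dual lattice vector G = m₁a₁* + m₂a₂*. -/
def dualVec (a0 : ℝ) (m : ℤ × ℤ) : Pt := (m.1 : ℝ) • as1 a0 + (m.2 : ℝ) • as2 a0

/-- 𝕃-periodicity in the first variable. -/
def LPeriodic (a0 : ℝ) (f : Pt → ℝ → ℂ) : Prop :=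
  ∀ R ∈ lat a0, ∀ (x : Pt) (z : ℝ), f (x + R) z = f x z

/-- K-quasiperiodicity in the first variable. -/
def KQuasiperiodic (a0 : ℝ) (Φ : Pt → ℝ → ℂ) : Prop :=
  ∀ R ∈ lat a0, ∀ (x : Pt) (z : ℝ),
    Φ (x + R) z = Complex.exp (Complex.I * (dot (Kpt a0) R : ℂ)) * Φ x z

/-- ω = e^{2πi/3}. -/
def ωc : ℂ := Complex.exp (2 * Real.pi * Complex.I / 3)

/-- The integrand of ((f,g))_d^{ηη'}(X). -/
def braFn (d η η' : ℝ) (f g : Pt → ℝ → ℂ) (X : Pt) (p : Pt × ℝ) : ℂ :=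
  (starRingEnd ℂ) (f (p.1 - (η / 2) • Jmat X) (p.2 - η * d / 2)) *
    g (p.1 - (η' / 2) • Jmat X) (p.2 - η' * d / 2)

/-- ((f,g))_d^{ηη'}(X), the interlayer pairing. -/
def bra (d : ℝ) (Ω : Set Pt) (η η' : ℝ) (f g : Pt → ℝ → ℂ) (X : Pt) : ℂ :=
  ∫ p in Ω ×ˢ (Set.univ : Set ℝ), braFn d η η' f g X p

open scoped Pointwise

theorem MeasureTheory.IsAddFundamentalDomain.setIntegral_comp_add_right {E F : Type*}
    [AddCommGroup E] [MeasurableSpace E] [MeasurableAdd E] [NormedAddCommGroup F] [NormedSpace ℝ F]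
    {μ : Measure E} [μ.IsAddLeftInvariant] {L : AddSubgroup E} [Countable L] {s : Set E}
    (hs : IsAddFundamentalDomain L s μ) {H : E → F} (hH : ∀ R ∈ L, ∀ x, H (x + R) = H x)
    (w : E) : ∫ x in s, H (x + w) ∂μ = ∫ x in s, H x ∂μ := by
  have htranslate : ∫ x in w +ᵥ s, H x ∂μ = ∫ x in s, H (w + x) ∂μ := by
    rw [← Set.image_vadd]
    exact (measurePreserving_add_left μ w).setIntegral_image_emb
      (measurableEmbedding_addLeft w) H s
  simp_rw [add_comm _ w, ← htranslate]
  exact (hs.vadd_of_comm w).setIntegral_eq hs fun R x => by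
    rw [AddSubgroup.vadd_def, vadd_eq_add, add_comm]
    exact hH R R.2 x

theorem MeasureTheory.IsAddFundamentalDomain.setIntegral_prod_univ_comp_add_fst {E β F : Type*}
    [AddCommGroup E] [MeasurableSpace E] [MeasurableAdd E] [MeasurableSpace β]
    [NormedAddCommGroup F] [NormedSpace ℝ F] {μ : Measure E} [μ.IsAddLeftInvariant] [SFinite μ]
    {ν : Measure β} [SFinite ν] {L : AddSubgroup E} [Countable L] {s : Set E}
    (hs : IsAddFundamentalDomain L s μ) {H : E × β → F}
    (hH : ∀ R ∈ L, ∀ x z, H (x + R, z) = H (x, z)) (w : E)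
    (hint : IntegrableOn H (s ×ˢ Set.univ) (μ.prod ν))
    (hint_add : IntegrableOn (fun p => H (p.1 + w, p.2)) (s ×ˢ Set.univ) (μ.prod ν)) :
    ∫ p in s ×ˢ Set.univ, H (p.1 + w, p.2) ∂μ.prod ν = ∫ p in s ×ˢ Set.univ, H p ∂μ.prod ν := by
  rw [setIntegral_prod _ hint, setIntegral_prod _ hint_add]
  exact hs.setIntegral_comp_add_right (H := fun x => ∫ z in Set.univ, H (x, z) ∂ν)
    (fun R hR x => by simp only [hH R hR]) w

instance (a0 : ℝ) : Countable (lat a0) := by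
  refine Set.Countable.to_subtype <| (Set.countable_range
    fun m : ℤ × ℤ => m.1 • av1 a0 + m.2 • av2 a0).mono fun v hv => ?_
  obtain ⟨m₁, m₂, rfl⟩ := AddSubgroup.mem_closure_pair.mp hv
  exact ⟨(m₁, m₂), rfl⟩

lemma intCast_smul_av1_add_mem_lat (a0 : ℝ) (m₁ m₂ : ℤ) :
    (m₁ : ℝ) • av1 a0 + (m₂ : ℝ) • av2 a0 ∈ lat a0 := by
  simp only [Int.cast_smul_eq_zsmul]
  exact AddSubgroup.mem_closure_pair.mpr ⟨m₁, m₂, rfl⟩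

lemma Jmat_smul_add_smul (c c' : ℝ) (v u : Pt) :
    Jmat (c • v + c' • u) = c • Jmat v + c' • Jmat u := by
  ext
  · simp [Jmat]
  · simp [Jmat]
    ring

lemma Jmat_sub_Jmat (X R : Pt) : Jmat (X - Jmat R) = Jmat X + R := by
  ext <;> simp [Jmat]
  ring

lemma dot_sub_right (v w u : Pt) : dot v (w - u) = dot v w - dot v u := by
  simp only [dot, Prod.fst_sub, Prod.snd_sub]
  ring

theorem bra_sub_Jmat {a0 d η η' : ℝ} {Ω : Set Pt} (hΩ : IsAddFundamentalDomain (lat a0) Ω volume)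
    {f g : Pt → ℝ → ℂ} (hf : LPeriodic a0 f) (hg : LPeriodic a0 g)
    (hint : ∀ X : Pt, IntegrableOn (braFn d η η' f g X) (Ω ×ˢ Set.univ) volume)
    {R : Pt} (hR : ((η - η') / 2) • R ∈ lat a0) (X : Pt) :
    bra d Ω η η' f g (X - Jmat R) = bra d Ω η η' f g X := by
  -- shifting `x` by `-(η/2) • R` absorbs the shift of `f`; what is left of the shift of `g` is
  -- the lattice vector `((η - η') / 2) • R`
  have hshift : braFn d η η' f g (X - Jmat R) =
      fun p => braFn d η η' f g X (p.1 + -((η / 2) • R), p.2) := by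
    funext p
    have hg_arg : p.1 - (η' / 2) • (Jmat X + R) =
        (p.1 + -((η / 2) • R) - (η' / 2) • Jmat X) + ((η - η') / 2) • R := by module
    simp only [braFn, Jmat_sub_Jmat, hg_arg, hg _ hR]
    congr 3
    module
  have hperiodic : ∀ R₀ ∈ lat a0, ∀ x z,
      braFn d η η' f g X (x + R₀, z) = braFn d η η' f g X (x, z) := by
    intro R₀ hR₀ x z
    simp only [braFn, add_sub_right_comm x R₀, hf R₀ hR₀, hg R₀ hR₀]
  have hint_shift := hint (X - Jmat R)
  rw [hshift] at hint_shift
  rw [bra, bra, hshift]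
  exact hΩ.setIntegral_prod_univ_comp_add_fst hperiodic _ (hint X) hint_shift

lemma dot_Jmat_Kpt_moire (a0 : ℝ) (ha0 : a0 ≠ 0) (m₁ m₂ : ℤ) :
    dot (Jmat (Kpt a0)) ((m₁ : ℝ) • Jmat (av1 a0) + (m₂ : ℝ) • Jmat (av2 a0)) =
      (m₁ + m₂ : ℤ) * (2 * π / 3) := by
  have hsqrt3 : Real.sqrt 3 ≠ 0 := by positivity
  simp only [dot, Kpt, as1, as2, av1, av2, Jmat, Prod.fst_add, Prod.snd_add, Prod.smul_fst,
    Prod.smul_snd, smul_eq_mul]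
  push_cast
  field_simp
  ring

lemma exp_I_mul_two_pi_div_three (n : ℤ) :
    Complex.exp (Complex.I * ((n * (2 * π / 3) : ℝ) : ℂ)) = ωc ^ n := by
  rw [ωc, ← Complex.exp_int_mul]
  congr 1
  push_cast
  ring

lemma ωc_zpow_three_mul (n : ℤ) : ωc ^ (3 * n) = 1 := by
  have hcube : ωc ^ (3 : ℤ) = 1 := by
    rw [ωc, ← Complex.exp_int_mul, ← Complex.exp_two_pi_mul_I]
    congr 1
    push_cast
    ring
  rw [zpow_mul, hcube, one_zpow]

theorem phase_mul_bra_sub_Jmat {a0 d : ℝ} {Ω : Set Pt}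
    (hΩ : IsAddFundamentalDomain (lat a0) Ω volume)
    {f g : Pt → ℝ → ℂ} (hf : LPeriodic a0 f) (hg : LPeriodic a0 g)
    (hint : ∀ X : Pt, IntegrableOn (braFn d 1 (-1) f g X) (Ω ×ˢ Set.univ) volume)
    (q : Pt) {R : Pt} (hR : R ∈ lat a0) (X : Pt) :
    Complex.exp (-Complex.I * (dot q (X - Jmat R) : ℂ)) * bra d Ω 1 (-1) f g (X - Jmat R) =
      Complex.exp (Complex.I * (dot q (Jmat R) : ℂ)) *
        (Complex.exp (-Complex.I * (dot q X : ℂ)) * bra d Ω 1 (-1) f g X) := by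
  rw [bra_sub_Jmat hΩ hf hg hint (by norm_num [hR]), ← mul_assoc, ← Complex.exp_add,
    dot_sub_right]
  congr 2
  push_cast
  ring

theorem stmt4_general (a0 d : ℝ) (ha0 : 0 < a0) (Ω : Set Pt)
    (hΩ : IsAddFundamentalDomain (lat a0) Ω volume)
    (f g : Pt → ℝ → ℂ)
    (hf : LPeriodic a0 f) (hg : LPeriodic a0 g)
    (hint : ∀ X : Pt,
      IntegrableOn (braFn d 1 (-1) f g X) (Ω ×ˢ (Set.univ : Set ℝ)) volume)
    (W : Pt → ℂ)
    (hW : ∀ X : Pt, W X =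
      Complex.exp (-Complex.I * (dot (Jmat (Kpt a0)) X : ℂ)) * bra d Ω 1 (-1) f g X) :
    ∀ (m₁ m₂ : ℤ) (X : Pt),
      W (X - ((m₁ : ℝ) • Jmat (av1 a0) + (m₂ : ℝ) • Jmat (av2 a0))) =
          Complex.exp (Complex.I *
            (dot (Jmat (Kpt a0)) ((m₁ : ℝ) • Jmat (av1 a0) + (m₂ : ℝ) • Jmat (av2 a0)) : ℂ)) *
            W X ∧
      W (X - ((m₁ : ℝ) • Jmat (av1 a0) + (m₂ : ℝ) • Jmat (av2 a0))) =
          ωc ^ (m₁ + m₂) * W X ∧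
      W (X - (3 : ℝ) • ((m₁ : ℝ) • Jmat (av1 a0) + (m₂ : ℝ) • Jmat (av2 a0))) = W X := by
  have hcov : ∀ (m₁ m₂ : ℤ) (X : Pt),
      W (X - ((m₁ : ℝ) • Jmat (av1 a0) + (m₂ : ℝ) • Jmat (av2 a0))) =
        Complex.exp (Complex.I *
          (dot (Jmat (Kpt a0)) ((m₁ : ℝ) • Jmat (av1 a0) + (m₂ : ℝ) • Jmat (av2 a0)) : ℂ)) *
          W X := by
    intro m₁ m₂ X
    rw [hW, hW, ← Jmat_smul_add_smul]
    exact phase_mul_bra_sub_Jmat hΩ hf hg hint _ (intCast_smul_av1_add_mem_lat a0 m₁ m₂) X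
  have hω : ∀ (m₁ m₂ : ℤ) (X : Pt),
      W (X - ((m₁ : ℝ) • Jmat (av1 a0) + (m₂ : ℝ) • Jmat (av2 a0))) = ωc ^ (m₁ + m₂) * W X := by
    intro m₁ m₂ X
    rw [hcov, dot_Jmat_Kpt_moire a0 ha0.ne', exp_I_mul_two_pi_div_three]
  intro m₁ m₂ X
  refine ⟨hcov m₁ m₂ X, hω m₁ m₂ X, ?_⟩
  have h3 : (3 : ℝ) • ((m₁ : ℝ) • Jmat (av1 a0) + (m₂ : ℝ) • Jmat (av2 a0)) =
      ((3 * m₁ : ℤ) : ℝ) • Jmat (av1 a0) + ((3 * m₂ : ℤ) : ℝ) • Jmat (av2 a0) := by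
    push_cast
    module
  rw [h3, hω, ← mul_add, ωc_zpow_three_mul, one_mul]

/-- translational covariance of W(X) := e^{−i(JK)·X} ((f,g))_d^{+−}(X)
under the moiré lattice 𝕃_M = J𝕃, and 3𝕃_M-periodicity. -/
theorem stmt4 (a0 d : ℝ) (ha0 : 0 < a0) (hd : 0 < d) (Ω : Set Pt)
    (hΩ : IsAddFundamentalDomain (lat a0) Ω volume)
    (f g : Pt → ℝ → ℂ)
    (hf : LPeriodic a0 f) (hg : LPeriodic a0 g)
    (hint : ∀ X : Pt,
      IntegrableOn (braFn d 1 (-1) f g X) (Ω ×ˢ (Set.univ : Set ℝ)) volume)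
    (W : Pt → ℂ)
    (hW : ∀ X : Pt, W X =
      Complex.exp (-Complex.I * (dot (Jmat (Kpt a0)) X : ℂ)) * bra d Ω 1 (-1) f g X) :
    ∀ (m₁ m₂ : ℤ) (X : Pt),
      W (X - ((m₁ : ℝ) • Jmat (av1 a0) + (m₂ : ℝ) • Jmat (av2 a0))) =
          Complex.exp (Complex.I *
            (dot (Jmat (Kpt a0)) ((m₁ : ℝ) • Jmat (av1 a0) + (m₂ : ℝ) • Jmat (av2 a0)) : ℂ)) *
            W X ∧
      W (X - ((m₁ : ℝ) • Jmat (av1 a0) + (m₂ : ℝ) • Jmat (av2 a0))) =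
          ωc ^ (m₁ + m₂) * W X ∧
      W (X - (3 : ℝ) • ((m₁ : ℝ) • Jmat (av1 a0) + (m₂ : ℝ) • Jmat (av2 a0))) = W X :=
  stmt4_general a0 d ha0 Ω hΩ f g hf hg hint W hW
end
end

section
/- Let h : ℝ² → ℂ be locally integrable with h(R_{2π/3} X) = h(X) for all X ∈ ℝ², and suppose the function X ↦ h(X) e^{i q₁·X} is 𝕃_M-periodic. Then for any fundamental domain Ω_M of 𝕃_M, the three integrals ∫_{Ω_M} h(X) e^{i q_n·X} dX for n = 1, 2, 3 are all equal; in particular (1/3) Σ_{n=1}^{3} ∫_{Ω_M} h(X) e^{i q_n·X} dX = ∫_{Ω_M} h(X) e^{i q₁·X} dX. -/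
noncomputable section

open MeasureTheory Real Complex

/-- q₁ = JK. -/
def q1v (a0 : ℝ) : Pt := Jmat (Kpt a0)

/-- q₂ = R_{2π/3} q₁. -/
def q2v (a0 : ℝ) : Pt := rotA (2 * π / 3) (q1v a0)

/-- q₃ = R_{2π/3} q₂. -/
def q3v (a0 : ℝ) : Pt := rotA (2 * π / 3) (q2v a0)

/-- F(X) = e^{−iq₁·X} + ω e^{−iq₂·X} + ω² e^{−iq₃·X}. -/
def Ffun (a0 : ℝ) (X : Pt) : ℂ :=
  Complex.exp (-Complex.I * (dot (q1v a0) X : ℂ)) +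
    ωc * Complex.exp (-Complex.I * (dot (q2v a0) X : ℂ)) +
    ωc ^ 2 * Complex.exp (-Complex.I * (dot (q3v a0) X : ℂ))

/-- G(X) = e^{−iq₁·X} + e^{−iq₂·X} + e^{−iq₃·X}. -/
def Gfun (a0 : ℝ) (X : Pt) : ℂ :=
  Complex.exp (-Complex.I * (dot (q1v a0) X : ℂ)) +
    Complex.exp (-Complex.I * (dot (q2v a0) X : ℂ)) +
    Complex.exp (-Complex.I * (dot (q3v a0) X : ℂ))

/-!
Let f(X) = h(X) e^{i q₁·X} and ρ = R_{2π/3}. Since ρ is orthogonal, ρ³ = 1, q₂ = ρ q₁,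
q₃ = ρ² q₁ and h ∘ ρ = h, the other two integrands are f ∘ ρ² and f ∘ ρ. The rotation ρ
preserves Lebesgue measure and maps 𝕃_M onto itself, so it carries Ω_M to another fundamental
domain of 𝕃_M, and integrals of the 𝕃_M-periodic function f over any two fundamental domains
agree.
-/

theorem MeasureTheory.IsAddFundamentalDomain.setIntegral_comp_eq {E F : Type*} [AddGroup E]
    [MeasurableSpace E] [MeasurableAdd E] {μ : Measure E} [μ.IsAddLeftInvariant]
    [NormedAddCommGroup F] [NormedSpace ℝ F] {Γ : AddSubgroup E} [Countable Γ] {s : Set E}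
    (hs : IsAddFundamentalDomain Γ s μ) (T : E ≃ᵐ E) (hT_add : ∀ x y, T (x + y) = T x + T y)
    (hTμ : MeasurePreserving T μ μ) (hTΓ : ∀ x, T x ∈ Γ ↔ x ∈ Γ) {f : E → F}
    (hf : ∀ γ ∈ Γ, ∀ x, f (γ + x) = f x) :
    ∫ x in s, f (T x) ∂μ = ∫ x in s, f x ∂μ := by
  have hTΓ_symm (γ : Γ) : T.symm γ ∈ Γ := (hTΓ _).1 (by simp)
  let e : Γ ≃ Γ :=
    { toFun := fun γ => ⟨T.symm γ, hTΓ_symm γ⟩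
      invFun := fun γ => ⟨T γ, (hTΓ γ).2 γ.2⟩
      left_inv := fun γ => by simp
      right_inv := fun γ => by simp }
  have hTs : IsAddFundamentalDomain Γ (T '' s) μ :=
    hs.image_of_equiv T.toEquiv hTμ.symm.quasiMeasurePreserving e fun γ x => by
      simp [e, AddSubgroup.vadd_def, hT_add]
  rw [← hTμ.setIntegral_image_emb T.measurableEmbedding, hTs.setIntegral_eq hs]
  exact fun γ x => hf γ γ.2 x

theorem AddSubgroup.countable_closure_pair {E : Type*} [AddCommGroup E] (x y : E) :
    Countable (AddSubgroup.closure {x, y}) := by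
  refine Function.Surjective.countable (f := fun p : ℤ × ℤ =>
    (⟨p.1 • x + p.2 • y, AddSubgroup.mem_closure_pair.2 ⟨p.1, p.2, rfl⟩⟩ :
      AddSubgroup.closure {x, y})) ?_
  rintro ⟨z, hz⟩
  obtain ⟨m, n, rfl⟩ := AddSubgroup.mem_closure_pair.1 hz
  exact ⟨(m, n), rfl⟩

def rotL (θ : ℝ) : Pt →ₗ[ℝ] Pt :=
  Matrix.toLin (Module.Basis.finTwoProd ℝ) (Module.Basis.finTwoProd ℝ)
    !![Real.cos θ, -Real.sin θ; Real.sin θ, Real.cos θ]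

theorem coe_rotL (θ : ℝ) : ⇑(rotL θ) = rotA θ := by
  ext v <;> simp [rotL, rotA, sub_eq_add_neg]

theorem det_rotL (θ : ℝ) : LinearMap.det (rotL θ) = 1 := by
  rw [rotL, LinearMap.det_toLin, Matrix.det_fin_two_of]
  linear_combination Real.cos_sq_add_sin_sq θ

theorem rotA_add (θ : ℝ) (v w : Pt) : rotA θ (v + w) = rotA θ v + rotA θ w := by
  simp only [← coe_rotL, map_add]

theorem measurable_rotA (θ : ℝ) : Measurable (rotA θ) := by
  unfold rotA; fun_prop

theorem measurePreserving_rotA (θ : ℝ) : MeasurePreserving (rotA θ) volume volume := by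
  refine ⟨measurable_rotA θ, ?_⟩
  have h := Measure.map_linearMap_addHaar_eq_smul_addHaar (volume : Measure Pt)
    (f := rotL θ) (by rw [det_rotL]; exact one_ne_zero)
  simpa [det_rotL, coe_rotL] using h

theorem dot_rotA (θ : ℝ) (v w : Pt) : dot (rotA θ v) (rotA θ w) = dot v w := by
  simp only [dot, rotA]
  linear_combination (v.1 * w.1 + v.2 * w.2) * Real.sin_sq_add_cos_sq θ

local notation "ρ" => rotA (2 * π / 3)

theorem rotA_two_pi_div_three_apply (v : Pt) :
    ρ v = (-(v.1 / 2) - √3 / 2 * v.2, √3 / 2 * v.1 - v.2 / 2) := by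
  have hcos : Real.cos (2 * π / 3) = -(1 / 2) := by
    rw [show 2 * π / 3 = π - π / 3 by ring, Real.cos_pi_sub, Real.cos_pi_div_three]
  have hsin : Real.sin (2 * π / 3) = √3 / 2 := by
    rw [show 2 * π / 3 = π - π / 3 by ring, Real.sin_pi_sub, Real.sin_pi_div_three]
  simp only [rotA, hcos, hsin, Prod.ext_iff]
  constructor <;> ring

theorem rotA_two_pi_div_three_cube (v : Pt) : ρ (ρ (ρ v)) = v := by
  have h3 : √3 ^ 2 = 3 := Real.sq_sqrt (by norm_num)
  simp only [rotA_two_pi_div_three_apply, Prod.ext_iff]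
  constructor
  · linear_combination (3 / 8 * v.1 + √3 / 8 * v.2) * h3
  · linear_combination (3 / 8 * v.2 - √3 / 8 * v.1) * h3

def rotThirdEquiv : Pt ≃ᵐ Pt where
  toFun := ρ
  invFun v := ρ (ρ v)
  left_inv := rotA_two_pi_div_three_cube
  right_inv := rotA_two_pi_div_three_cube
  measurable_toFun := measurable_rotA _
  measurable_invFun := (measurable_rotA _).comp (measurable_rotA _)

theorem dot_rotA_two_pi_div_three_left (v w : Pt) : dot (ρ v) w = dot v (ρ (ρ w)) := by
  conv_lhs => rw [← rotA_two_pi_div_three_cube w]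
  rw [dot_rotA]

theorem rotA_two_pi_div_three_jmat_av1 (a0 : ℝ) : ρ (Jmat (av1 a0)) = Jmat (av2 a0) := by
  have h3 : √3 ^ 2 = 3 := Real.sq_sqrt (by norm_num)
  simp only [rotA_two_pi_div_three_apply, Jmat, av1, av2, Prod.ext_iff]
  constructor
  · ring
  · linear_combination (-(a0 / 4)) * h3

theorem rotA_two_pi_div_three_jmat_av2 (a0 : ℝ) :
    ρ (Jmat (av2 a0)) = -Jmat (av1 a0) - Jmat (av2 a0) := by
  have h3 : √3 ^ 2 = 3 := Real.sq_sqrt (by norm_num)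
  simp only [rotA_two_pi_div_three_apply, Jmat, av1, av2, Prod.ext_iff, Prod.fst_sub,
    Prod.snd_sub, Prod.fst_neg, Prod.snd_neg]
  constructor
  · ring
  · linear_combination (a0 / 4) * h3

theorem rotA_mem_latM {a0 : ℝ} {v : Pt} (hv : v ∈ latM a0) : ρ v ∈ latM a0 := by
  obtain ⟨m, n, rfl⟩ := AddSubgroup.mem_closure_pair.1 hv
  have h1 : Jmat (av1 a0) ∈ latM a0 := AddSubgroup.subset_closure (by simp)
  have h2 : Jmat (av2 a0) ∈ latM a0 := AddSubgroup.subset_closure (by simp)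
  rw [← coe_rotL, map_add, map_zsmul, map_zsmul, coe_rotL, rotA_two_pi_div_three_jmat_av1,
    rotA_two_pi_div_three_jmat_av2]
  exact add_mem (zsmul_mem h2 m) (zsmul_mem (sub_mem (neg_mem h1) h2) n)

theorem rotA_mem_latM_iff {a0 : ℝ} {v : Pt} : ρ v ∈ latM a0 ↔ v ∈ latM a0 :=
  ⟨fun hv => rotA_two_pi_div_three_cube v ▸ rotA_mem_latM (rotA_mem_latM hv), rotA_mem_latM⟩

instance (a0 : ℝ) : Countable (latM a0) := AddSubgroup.countable_closure_pair _ _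

theorem stmt8_general (a0 : ℝ) (h : Pt → ℂ)
    (hrot : ∀ X : Pt, h (rotA (2 * π / 3) X) = h X)
    (hper : ∀ R ∈ latM a0, ∀ X : Pt,
      h (X + R) * Complex.exp (Complex.I * (dot (q1v a0) (X + R) : ℂ)) =
        h X * Complex.exp (Complex.I * (dot (q1v a0) X : ℂ)))
    (ΩM : Set Pt) (hΩM : IsAddFundamentalDomain (latM a0) ΩM volume) :
    (∫ X in ΩM, h X * Complex.exp (Complex.I * (dot (q2v a0) X : ℂ))) =
        (∫ X in ΩM, h X * Complex.exp (Complex.I * (dot (q1v a0) X : ℂ))) ∧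
    (∫ X in ΩM, h X * Complex.exp (Complex.I * (dot (q3v a0) X : ℂ))) =
        (∫ X in ΩM, h X * Complex.exp (Complex.I * (dot (q1v a0) X : ℂ))) ∧
    (3 : ℂ)⁻¹ * ((∫ X in ΩM, h X * Complex.exp (Complex.I * (dot (q1v a0) X : ℂ))) +
          (∫ X in ΩM, h X * Complex.exp (Complex.I * (dot (q2v a0) X : ℂ))) +
          (∫ X in ΩM, h X * Complex.exp (Complex.I * (dot (q3v a0) X : ℂ)))) =
        ∫ X in ΩM, h X * Complex.exp (Complex.I * (dot (q1v a0) X : ℂ)) := by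
  set f : Pt → ℂ := fun X => h X * Complex.exp (Complex.I * (dot (q1v a0) X : ℂ))
  have hf : ∀ R ∈ latM a0, ∀ X, f (R + X) = f X := fun R hR X => add_comm R X ▸ hper R hR X
  have hR := hΩM.setIntegral_comp_eq rotThirdEquiv (rotA_add _) (measurePreserving_rotA _)
    (fun _ => rotA_mem_latM_iff) hf
  have hR2 := hΩM.setIntegral_comp_eq (rotThirdEquiv.trans rotThirdEquiv)
    (fun x y => by simp [rotThirdEquiv, rotA_add])
    ((measurePreserving_rotA _).comp (measurePreserving_rotA _))
    (fun _ => rotA_mem_latM_iff.trans rotA_mem_latM_iff) hf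
  have h2 : (∫ X in ΩM, h X * Complex.exp (Complex.I * (dot (q2v a0) X : ℂ))) =
      ∫ X in ΩM, f X := by
    rw [← hR2]
    congr 1 with X
    simp [f, rotThirdEquiv, hrot, q2v, dot_rotA_two_pi_div_three_left]
  have h3 : (∫ X in ΩM, h X * Complex.exp (Complex.I * (dot (q3v a0) X : ℂ))) =
      ∫ X in ΩM, f X := by
    rw [← hR]
    congr 1 with X
    simp [f, rotThirdEquiv, hrot, q3v, q2v, dot_rotA_two_pi_div_three_left,
      rotA_two_pi_div_three_cube]
  refine ⟨h2, h3, ?_⟩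
  rw [h2, h3]
  ring

/-- if h is R_{2π/3}-invariant and X ↦ h(X)e^{iq₁·X} is 𝕃_M-periodic, then the
three integrals ∫_{Ω_M} h e^{iq_n·X} dX (n = 1,2,3) coincide, so their average equals the
first one. -/
theorem stmt8 (a0 : ℝ) (ha0 : 0 < a0) (h : Pt → ℂ)
    (hloc : LocallyIntegrable h volume)
    (hrot : ∀ X : Pt, h (rotA (2 * π / 3) X) = h X)
    (hper : ∀ R ∈ latM a0, ∀ X : Pt,
      h (X + R) * Complex.exp (Complex.I * (dot (q1v a0) (X + R) : ℂ)) =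
        h X * Complex.exp (Complex.I * (dot (q1v a0) X : ℂ)))
    (ΩM : Set Pt) (hΩM : IsAddFundamentalDomain (latM a0) ΩM volume) :
    (∫ X in ΩM, h X * Complex.exp (Complex.I * (dot (q2v a0) X : ℂ))) =
        (∫ X in ΩM, h X * Complex.exp (Complex.I * (dot (q1v a0) X : ℂ))) ∧
    (∫ X in ΩM, h X * Complex.exp (Complex.I * (dot (q3v a0) X : ℂ))) =
        (∫ X in ΩM, h X * Complex.exp (Complex.I * (dot (q1v a0) X : ℂ))) ∧
    (3 : ℂ)⁻¹ * ((∫ X in ΩM, h X * Complex.exp (Complex.I * (dot (q1v a0) X : ℂ))) +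
          (∫ X in ΩM, h X * Complex.exp (Complex.I * (dot (q2v a0) X : ℂ))) +
          (∫ X in ΩM, h X * Complex.exp (Complex.I * (dot (q3v a0) X : ℂ)))) =
        ∫ X in ΩM, h X * Complex.exp (Complex.I * (dot (q1v a0) X : ℂ)) :=
  stmt8_general a0 h hrot hper ΩM hΩM
end
end

section
/- Let d > 0. Let V : ℝ² × ℝ → ℝ be 𝕃-periodic in its first variable with V(−x₁, x₂, z) = V(x₁, x₂, z) and V(x₁, −x₂, z) = V(x₁, x₂, z) for all (x₁,x₂,z); let V_int : ℝ → ℝ; and let u₁, u₂ : ℝ² × ℝ → ℂ be 𝕃-periodic in their first variable with conj(u_j(x₁, x₂, z)) = −u_j(−x₁, x₂, z) for j = 1,2 and u₂(x₁, x₂, z) = u₁(x₁, −x₂, z), all functions being integrable enough for the integrals below to converge absolutely. Define w_AA := ∫_ℝ [∫_Ω conj((V(x, z−d/2) + V_int(z)) · u₁(x, z−d/2)) dx] · [|Ω|⁻¹ ∫_Ω u₁(x, z+d/2) dx] dz and w_AB := ∫_ℝ [∫_Ω conj((V(x, z−d/2) + V_int(z)) · u₂(x, z−d/2)) dx] ·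 [|Ω|⁻¹ ∫_Ω u₁(x, z+d/2) dx] dz. Then w_AA and w_AB are real numbers and w_AA = w_AB. -/
noncomputable section

open MeasureTheory Real Complex

lemma lat_elem (a0 : ℝ) : ∀ y ∈ lat a0, ∃ p : ℤ × ℤ, p.1 • av1 a0 + p.2 • av2 a0 = y := by
  intro y hy
  refine AddSubgroup.closure_induction ?_ ?_ ?_ ?_ hy
  · rintro x (rfl | rfl)
    · exact ⟨(1, 0), by simp⟩
    · exact ⟨(0, 1), by simp⟩
  · exact ⟨(0, 0), by simp⟩
  · rintro x y _ _ ⟨p, rfl⟩ ⟨q, rfl⟩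
    exact ⟨(p.1 + q.1, p.2 + q.2), by module⟩
  · rintro x _ ⟨p, rfl⟩
    exact ⟨(-p.1, -p.2), by module⟩

instance latCountable (a0 : ℝ) : Countable (lat a0) := by
  have hmem : ∀ p : ℤ × ℤ, p.1 • av1 a0 + p.2 • av2 a0 ∈ lat a0 := fun p =>
    add_mem (zsmul_mem (AddSubgroup.subset_closure (by simp)) _)
      (zsmul_mem (AddSubgroup.subset_closure (by simp)) _)
  have hsurj : Function.Surjective
      (fun p : ℤ × ℤ => (⟨p.1 • av1 a0 + p.2 • av2 a0, hmem p⟩ : lat a0)) := by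
    rintro ⟨y, hy⟩
    obtain ⟨p, hp⟩ := lat_elem a0 y hy
    exact ⟨p, Subtype.ext hp⟩
  exact hsurj.countable

/-- Reflection (x₁,x₂) ↦ (−x₁,x₂) as an additive equiv. -/
def sig1 : Pt ≃+ Pt where
  toFun x := (-x.1, x.2)
  invFun x := (-x.1, x.2)
  left_inv x := by simp
  right_inv x := by simp
  map_add' x y := by simp [Prod.ext_iff, neg_add, add_comm]

/-- Reflection (x₁,x₂) ↦ (x₁,−x₂) as an additive equiv. -/
def sig2 : Pt ≃+ Pt where
  toFun x := (x.1, -x.2)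
  invFun x := (x.1, -x.2)
  left_inv x := by simp
  right_inv x := by simp
  map_add' x y := by simp [Prod.ext_iff, neg_add, add_comm]

lemma sig1_mp : MeasurePreserving (sig1 : Pt → Pt) volume volume := by
  have h := (Measure.measurePreserving_neg (volume : Measure ℝ)).prod
    (MeasurePreserving.id (volume : Measure ℝ))
  rw [← MeasureTheory.Measure.volume_eq_prod] at h
  exact h

lemma sig2_mp : MeasurePreserving (sig2 : Pt → Pt) volume volume := by
  have h := (MeasurePreserving.id (volume : Measure ℝ)).prod
    (Measure.measurePreserving_neg (volume : Measure ℝ))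
  rw [← MeasureTheory.Measure.volume_eq_prod] at h
  exact h

lemma sig1_emb : MeasurableEmbedding (sig1 : Pt → Pt) :=
  (((Homeomorph.neg ℝ).prodCongr (Homeomorph.refl ℝ)).measurableEmbedding)

lemma sig2_emb : MeasurableEmbedding (sig2 : Pt → Pt) :=
  (((Homeomorph.refl ℝ).prodCongr (Homeomorph.neg ℝ)).measurableEmbedding)

lemma sig1_lat (a0 : ℝ) : ∀ R ∈ lat a0, sig1 R ∈ lat a0 := by
  intro R hR
  obtain ⟨p, rfl⟩ := lat_elem a0 R hR
  have h1 : sig1 (av1 a0) = -(av2 a0) := by simp [sig1, av1, av2, Prod.ext_iff]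
  have h2 : sig1 (av2 a0) = -(av1 a0) := by simp [sig1, av1, av2, Prod.ext_iff]
  rw [map_add, map_zsmul, map_zsmul, h1, h2]
  exact add_mem (zsmul_mem (neg_mem (AddSubgroup.subset_closure (by simp))) _)
    (zsmul_mem (neg_mem (AddSubgroup.subset_closure (by simp))) _)

lemma sig2_lat (a0 : ℝ) : ∀ R ∈ lat a0, sig2 R ∈ lat a0 := by
  intro R hR
  obtain ⟨p, rfl⟩ := lat_elem a0 R hR
  have h1 : sig2 (av1 a0) = av2 a0 := by simp [sig2, av1, av2, Prod.ext_iff]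
  have h2 : sig2 (av2 a0) = av1 a0 := by simp [sig2, av1, av2, Prod.ext_iff]
  rw [map_add, map_zsmul, map_zsmul, h1, h2]
  exact add_mem (zsmul_mem (AddSubgroup.subset_closure (by simp)) _)
    (zsmul_mem (AddSubgroup.subset_closure (by simp)) _)

/-- Key change-of-variable lemma: integrating a lattice-periodic function composed with a
lattice-preserving measure-preserving involution over a fundamental domain. -/
lemma key {a0 : ℝ} {Ω : Set Pt} (hΩ : IsAddFundamentalDomain (lat a0) Ω volume)
    (σ : Pt ≃+ Pt) (hmp : MeasurePreserving (σ : Pt → Pt) volume volume)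
    (hemb : MeasurableEmbedding (σ : Pt → Pt))
    (hinv : ∀ x, σ (σ x) = x)
    (hlat : ∀ R ∈ lat a0, σ R ∈ lat a0)
    (f : Pt → ℂ) (hf : ∀ R ∈ lat a0, ∀ x : Pt, f (x + R) = f x) :
    ∫ x in Ω, f (σ x) = ∫ x in Ω, f x := by
  set e : lat a0 → lat a0 := fun R => ⟨σ R, hlat R R.2⟩ with he
  have hebij : Function.Bijective e := by
    constructor
    · intro x y h
      have h' : σ (x : Pt) = σ (y : Pt) := congrArg Subtype.val h
      have := congrArg σ h'
      rw [hinv, hinv] at this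
      exact Subtype.ext this
    · intro y
      exact ⟨e y, Subtype.ext (by simp [he, hinv])⟩
  have hΩ' : IsAddFundamentalDomain (lat a0) ((σ : Pt → Pt) ⁻¹' Ω) volume := by
    refine hΩ.preimage_of_equiv hmp.quasiMeasurePreserving hebij fun g x => ?_
    show σ ((e g : Pt) + x) = (g : Pt) + σ x
    rw [map_add]
    simp [he, hinv]
  have hpre : (σ : Pt → Pt) ⁻¹' ((σ : Pt → Pt) ⁻¹' Ω) = Ω := by
    ext x; simp [hinv x]
  have h1 : ∫ x in Ω, f (σ x) = ∫ y in (σ : Pt → Pt) ⁻¹' Ω, f y := by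
    conv_lhs => rw [← hpre]
    exact hmp.setIntegral_preimage_emb hemb f _
  rw [h1]
  refine hΩ'.setIntegral_eq hΩ fun g x => ?_
  show f ((g : Pt) + x) = f x
  rw [add_comm]
  exact hf g g.2 x


lemma sig1_inv : ∀ x : Pt, sig1 (sig1 x) = x := fun x => by
  show ((-(-x.1), x.2) : Pt) = x
  simp

lemma sig2_inv : ∀ x : Pt, sig2 (sig2 x) = x := fun x => by
  show ((x.1, -(-x.2)) : Pt) = x
  simp


/-- the first-principles Bistritzer-MacDonald parameters w_AA and w_AB are real
and equal. -/
theorem stmt9 (a0 d : ℝ) (ha0 : 0 < a0) (hd : 0 < d) (Ω : Set Pt)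
    (hΩ : IsAddFundamentalDomain (lat a0) Ω volume)
    (V : Pt → ℝ → ℝ) (Vint : ℝ → ℝ) (u1 u2 : Pt → ℝ → ℂ)
    (hVper : ∀ R ∈ lat a0, ∀ (x : Pt) (z : ℝ), V (x + R) z = V x z)
    (hVs1 : ∀ (x : Pt) (z : ℝ), V (-x.1, x.2) z = V x z)
    (hVs2 : ∀ (x : Pt) (z : ℝ), V (x.1, -x.2) z = V x z)
    (hu1per : LPeriodic a0 u1) (hu2per : LPeriodic a0 u2)
    (hu1s : ∀ (x : Pt) (z : ℝ), (starRingEnd ℂ) (u1 x z) = -u1 (-x.1, x.2) z)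
    (hu2s : ∀ (x : Pt) (z : ℝ), (starRingEnd ℂ) (u2 x z) = -u2 (-x.1, x.2) z)
    (hu21 : ∀ (x : Pt) (z : ℝ), u2 x z = u1 (x.1, -x.2) z)
    (hint1 : ∀ z : ℝ, IntegrableOn
      (fun x : Pt => ((V x (z - d / 2) + Vint z : ℝ) : ℂ) * u1 x (z - d / 2)) Ω volume)
    (hint2 : ∀ z : ℝ, IntegrableOn
      (fun x : Pt => ((V x (z - d / 2) + Vint z : ℝ) : ℂ) * u2 x (z - d / 2)) Ω volume)
    (hint3 : ∀ z : ℝ, IntegrableOn (fun x : Pt => u1 x (z + d / 2)) Ω volume)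
    (hintz1 : Integrable (fun z : ℝ =>
      (∫ x in Ω, (starRingEnd ℂ) (((V x (z - d / 2) + Vint z : ℝ) : ℂ) * u1 x (z - d / 2))) *
        ((((volume Ω).toReal : ℝ) : ℂ)⁻¹ * ∫ x in Ω, u1 x (z + d / 2))) volume)
    (hintz2 : Integrable (fun z : ℝ =>
      (∫ x in Ω, (starRingEnd ℂ) (((V x (z - d / 2) + Vint z : ℝ) : ℂ) * u2 x (z - d / 2))) *
        ((((volume Ω).toReal : ℝ) : ℂ)⁻¹ * ∫ x in Ω, u1 x (z + d / 2))) volume)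
    (wAA wAB : ℂ)
    (hwAA : wAA = ∫ z : ℝ,
      (∫ x in Ω, (starRingEnd ℂ) (((V x (z - d / 2) + Vint z : ℝ) : ℂ) * u1 x (z - d / 2))) *
        ((((volume Ω).toReal : ℝ) : ℂ)⁻¹ * ∫ x in Ω, u1 x (z + d / 2)))
    (hwAB : wAB = ∫ z : ℝ,
      (∫ x in Ω, (starRingEnd ℂ) (((V x (z - d / 2) + Vint z : ℝ) : ℂ) * u2 x (z - d / 2))) *
        ((((volume Ω).toReal : ℝ) : ℂ)⁻¹ * ∫ x in Ω, u1 x (z + d / 2))) :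
    (starRingEnd ℂ) wAA = wAA ∧ (starRingEnd ℂ) wAB = wAB ∧ wAA = wAB := by
  have hU1 : ∀ R ∈ lat a0, ∀ (x : Pt) (z : ℝ), u1 (x + R) z = u1 x z := hu1per
  have hU2 : ∀ R ∈ lat a0, ∀ (x : Pt) (z : ℝ), u2 (x + R) z = u2 x z := hu2per
  have key1 := fun (f : Pt → ℂ) hf => key hΩ sig1 sig1_mp sig1_emb sig1_inv (sig1_lat a0) f hf
  have key2 := fun (f : Pt → ℂ) hf => key hΩ sig2 sig2_mp sig2_emb sig2_inv (sig2_lat a0) f hf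
  have hcconj : (starRingEnd ℂ) ((((volume Ω).toReal : ℝ) : ℂ)⁻¹)
      = (((volume Ω).toReal : ℝ) : ℂ)⁻¹ := by
    rw [map_inv₀, Complex.conj_ofReal]
  -- conj of the u1-average
  have hI : ∀ z : ℝ, (starRingEnd ℂ) (∫ x in Ω, u1 x z) = -∫ x in Ω, u1 x z := by
    intro z
    rw [← integral_conj]
    calc ∫ x in Ω, (starRingEnd ℂ) (u1 x z)
        = ∫ x in Ω, -u1 (sig1 x) z := by
          refine integral_congr_ae (Filter.Eventually.of_forall fun x => ?_)
          exact hu1s x z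
      _ = -∫ x in Ω, u1 (sig1 x) z := integral_neg _
      _ = -∫ x in Ω, u1 x z := by
          rw [key1 (fun x => u1 x z) (fun R hR x => hU1 R hR x z)]
  -- conj of the potential-weighted integrals
  have hA : ∀ (u : Pt → ℝ → ℂ),
      (∀ R ∈ lat a0, ∀ (x : Pt) (z : ℝ), u (x + R) z = u x z) →
      (∀ (x : Pt) (z : ℝ), (starRingEnd ℂ) (u x z) = -u (-x.1, x.2) z) →
      ∀ z : ℝ, (starRingEnd ℂ)
        (∫ x in Ω, (starRingEnd ℂ) (((V x (z - d / 2) + Vint z : ℝ) : ℂ) * u x (z - d / 2)))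
      = -(∫ x in Ω, (starRingEnd ℂ) (((V x (z - d / 2) + Vint z : ℝ) : ℂ) * u x (z - d / 2))) := by
    intro u huper hus z
    set g : Pt → ℂ := fun x => ((V x (z - d / 2) + Vint z : ℝ) : ℂ) * u x (z - d / 2) with hg
    have hgper : ∀ R ∈ lat a0, ∀ x : Pt, g (x + R) = g x := by
      intro R hR x
      simp only [hg, hVper R hR, huper R hR]
    have hcomp : ∀ x : Pt, g (sig1 x) = -(starRingEnd ℂ) (g x) := by
      intro x
      show ((V (-x.1, x.2) (z - d / 2) + Vint z : ℝ) : ℂ) * u (-x.1, x.2) (z - d / 2)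
        = -(starRingEnd ℂ) (((V x (z - d / 2) + Vint z : ℝ) : ℂ) * u x (z - d / 2))
      rw [map_mul, Complex.conj_ofReal, hus, hVs1]
      ring
    rw [integral_conj, Complex.conj_conj, ← integral_conj]
    calc ∫ x in Ω, g x
        = ∫ x in Ω, g (sig1 x) := (key1 g hgper).symm
      _ = ∫ x in Ω, -(starRingEnd ℂ) (g x) := by
          refine integral_congr_ae (Filter.Eventually.of_forall fun x => ?_)
          exact hcomp x
      _ = -∫ x in Ω, (starRingEnd ℂ) (g x) := integral_neg _
  have hA1 := hA u1 hU1 hu1s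
  have hA2 := hA u2 hU2 hu2s
  -- equality of the u1 and u2 weighted integrals
  have hAB : ∀ z : ℝ,
      (∫ x in Ω, (starRingEnd ℂ) (((V x (z - d / 2) + Vint z : ℝ) : ℂ) * u2 x (z - d / 2)))
      = ∫ x in Ω, (starRingEnd ℂ) (((V x (z - d / 2) + Vint z : ℝ) : ℂ) * u1 x (z - d / 2)) := by
    intro z
    set g : Pt → ℂ := fun x =>
      (starRingEnd ℂ) (((V x (z - d / 2) + Vint z : ℝ) : ℂ) * u1 x (z - d / 2)) with hg
    have hgper : ∀ R ∈ lat a0, ∀ x : Pt, g (x + R) = g x := by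
      intro R hR x
      simp only [hg, hVper R hR, hU1 R hR]
    have hcomp : ∀ x : Pt,
        (starRingEnd ℂ) (((V x (z - d / 2) + Vint z : ℝ) : ℂ) * u2 x (z - d / 2))
          = g (sig2 x) := by
      intro x
      show (starRingEnd ℂ) (((V x (z - d / 2) + Vint z : ℝ) : ℂ) * u2 x (z - d / 2))
        = (starRingEnd ℂ) (((V (x.1, -x.2) (z - d / 2) + Vint z : ℝ) : ℂ)
            * u1 (x.1, -x.2) (z - d / 2))
      rw [hVs2, hu21]
    calc ∫ x in Ω, (starRingEnd ℂ) (((V x (z - d / 2) + Vint z : ℝ) : ℂ) * u2 x (z - d / 2))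
        = ∫ x in Ω, g (sig2 x) := by
          refine integral_congr_ae (Filter.Eventually.of_forall fun x => ?_)
          exact hcomp x
      _ = ∫ x in Ω, g x := key2 g hgper
  -- pointwise reality of the integrands
  have hptAA : ∀ z : ℝ, (starRingEnd ℂ)
      ((∫ x in Ω, (starRingEnd ℂ) (((V x (z - d / 2) + Vint z : ℝ) : ℂ) * u1 x (z - d / 2))) *
        ((((volume Ω).toReal : ℝ) : ℂ)⁻¹ * ∫ x in Ω, u1 x (z + d / 2)))
      = (∫ x in Ω, (starRingEnd ℂ) (((V x (z - d / 2) + Vint z : ℝ) : ℂ) * u1 x (z - d / 2))) *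
        ((((volume Ω).toReal : ℝ) : ℂ)⁻¹ * ∫ x in Ω, u1 x (z + d / 2)) := by
    intro z
    rw [map_mul, map_mul, hA1 z, hcconj, hI (z + d / 2)]
    ring
  have hptAB : ∀ z : ℝ, (starRingEnd ℂ)
      ((∫ x in Ω, (starRingEnd ℂ) (((V x (z - d / 2) + Vint z : ℝ) : ℂ) * u2 x (z - d / 2))) *
        ((((volume Ω).toReal : ℝ) : ℂ)⁻¹ * ∫ x in Ω, u1 x (z + d / 2)))
      = (∫ x in Ω, (starRingEnd ℂ) (((V x (z - d / 2) + Vint z : ℝ) : ℂ) * u2 x (z - d / 2))) *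
        ((((volume Ω).toReal : ℝ) : ℂ)⁻¹ * ∫ x in Ω, u1 x (z + d / 2)) := by
    intro z
    rw [map_mul, map_mul, hA2 z, hcconj, hI (z + d / 2)]
    ring
  refine ⟨?_, ?_, ?_⟩
  · rw [hwAA, ← integral_conj]
    exact integral_congr_ae (Filter.Eventually.of_forall hptAA)
  · rw [hwAB, ← integral_conj]
    exact integral_congr_ae (Filter.Eventually.of_forall hptAB)
  · rw [hwAA, hwAB]
    refine (integral_congr_ae (Filter.Eventually.of_forall fun z => ?_)).symm
    rw [hAB z]
end
end

section
/- Let f, g : ℝ² × ℝ → ℂ be such that the integral defining ((f,g))_d^{+−} converges absolutely, and let d > 0. Then for all X ∈ ℝ²: conj(((f,g))_d^{+−}(−X)) = ((Sg, Sf))_d^{+−}(X), where (Sf)(x,z) := f(x,−z). Consequently, if moreover f(x,−z) = −f(x,z) and g(x,−z) = −g(x,z) for all (x,z), then conj(((f,g))_d^{+−}(−X)) = ((g,f))_d^{+−}(X). -/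
noncomputable section

open MeasureTheory Real Complex

/-- conj(((f,g))_d^{+−}(−X)) = ((Sg,Sf))_d^{+−}(X) with (Sf)(x,z) = f(x,−z);
hence for f, g odd in z, conj(((f,g))_d^{+−}(−X)) = ((g,f))_d^{+−}(X). -/
theorem stmt10 (a0 d : ℝ) (ha0 : 0 < a0) (hd : 0 < d) (Ω : Set Pt)
    (hΩ : IsAddFundamentalDomain (lat a0) Ω volume)
    (f g : Pt → ℝ → ℂ)
    (hint : ∀ X : Pt,
      IntegrableOn (braFn d 1 (-1) f g X) (Ω ×ˢ (Set.univ : Set ℝ)) volume) :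
    (∀ X : Pt, (starRingEnd ℂ) (bra d Ω 1 (-1) f g (-X)) =
        bra d Ω 1 (-1) (fun x z => g x (-z)) (fun x z => f x (-z)) X) ∧
    ((∀ (x : Pt) (z : ℝ), f x (-z) = -f x z) → (∀ (x : Pt) (z : ℝ), g x (-z) = -g x z) →
      ∀ X : Pt, (starRingEnd ℂ) (bra d Ω 1 (-1) f g (-X)) = bra d Ω 1 (-1) g f X) := by
  have key : ∀ X : Pt, (starRingEnd ℂ) (bra d Ω 1 (-1) f g (-X)) =
      bra d Ω 1 (-1) (fun x z => g x (-z)) (fun x z => f x (-z)) X := by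
    intro X
    have hT : MeasurePreserving (fun p : Pt × ℝ => (p.1, -p.2))
        (volume : Measure (Pt × ℝ)) volume :=
      (MeasurePreserving.id volume).prod (Measure.measurePreserving_neg volume)
    have hemb : MeasurableEmbedding (fun p : Pt × ℝ => (p.1, -p.2)) :=
      (MeasurableEquiv.prodCongr (MeasurableEquiv.refl Pt)
        (Homeomorph.neg ℝ).toMeasurableEquiv).measurableEmbedding
    have hpre : (fun p : Pt × ℝ => (p.1, -p.2)) ⁻¹' (Ω ×ˢ (Set.univ : Set ℝ))
        = Ω ×ˢ (Set.univ : Set ℝ) := by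
      ext p; simp
    have harg1 : ∀ p : Pt, p - ((1:ℝ) / 2) • Jmat (-X) = p + ((1:ℝ) / 2) • Jmat X := by
      intro p
      simp only [Jmat, Prod.ext_iff, Prod.smul_mk, Prod.fst_sub, Prod.snd_sub,
        Prod.fst_add, Prod.snd_add, Prod.fst_neg, Prod.snd_neg, smul_eq_mul]
      constructor <;> ring
    have harg2 : ∀ p : Pt, p - ((-1:ℝ) / 2) • Jmat (-X) = p - ((1:ℝ) / 2) • Jmat X := by
      intro p
      simp only [Jmat, Prod.ext_iff, Prod.smul_mk, Prod.fst_sub, Prod.snd_sub,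
        Prod.fst_neg, Prod.snd_neg, smul_eq_mul]
      constructor <;> ring
    have harg3 : ∀ p : Pt, p - ((-1:ℝ) / 2) • Jmat X = p - ((1:ℝ) / 2) • Jmat (-X) := by
      intro p
      simp only [Jmat, Prod.ext_iff, Prod.smul_mk, Prod.fst_sub, Prod.snd_sub,
        Prod.fst_neg, Prod.snd_neg, smul_eq_mul]
      constructor <;> ring
    have hpt : ∀ p : Pt × ℝ,
        (starRingEnd ℂ) (braFn d 1 (-1) f g (-X) p)
          = braFn d 1 (-1) (fun x z => g x (-z)) (fun x z => f x (-z)) X (p.1, -p.2) := by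
      intro p
      simp only [braFn, map_mul, Complex.conj_conj]
      rw [mul_comm]
      have e1 : p.1 - ((1:ℝ) / 2) • Jmat (-X) = (p.1, -p.2).1 - ((-1:ℝ) / 2) • Jmat X := by
        rw [harg1]; rw [harg3]; rw [harg1]
      have e2 : p.2 - 1 * d / 2 = -(-p.2 - (-1) * d / 2) := by ring
      have e3 : p.1 - ((-1:ℝ) / 2) • Jmat (-X) = (p.1, -p.2).1 - ((1:ℝ) / 2) • Jmat X := by
        rw [harg2]
      have e4 : p.2 - (-1) * d / 2 = -(-p.2 - 1 * d / 2) := by ring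
      rw [e1, e2, e3, e4]
    have hrw : (starRingEnd ℂ) (bra d Ω 1 (-1) f g (-X))
        = ∫ p in Ω ×ˢ (Set.univ : Set ℝ),
            braFn d 1 (-1) (fun x z => g x (-z)) (fun x z => f x (-z)) X
              ((fun p : Pt × ℝ => (p.1, -p.2)) p) := by
      rw [bra, ← integral_conj]
      exact integral_congr_ae (Filter.Eventually.of_forall fun p => hpt p)
    rw [hrw, bra, ← hpre, hT.setIntegral_preimage_emb hemb, hpre]
  refine ⟨key, fun hf hg X => ?_⟩
  rw [key X, bra, bra]
  congr 1
  funext p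
  simp only [braFn, hf, hg, map_neg, neg_mul, mul_neg, neg_neg]
end
end

section
/- Let f, g : ℝ² × ℝ → ℂ be 𝕃-periodic in their first variable, odd in z (f(x,−z) = −f(x,z) and g(x,−z) = −g(x,z) for all (x,z)), and such that the integral defining ((f,g))_d^{+−} converges absolutely, and let d > 0. Then for all X ∈ ℝ²: ((f,g))_d^{+−}(X) = ((CPg, CPf))_d^{+−}(X), where (CPf)(x,z) := conj(f(−x, z)). -/
noncomputable section

open MeasureTheory Real Complex

/-- Auxiliary: the closure of a pair of points is countable. -/
lemma countable_closure_pair (a b : Pt) :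
    Countable (AddSubgroup.closure {a, b} : AddSubgroup Pt) := by
  classical
  let phi : ℤ × ℤ → Pt := fun mn => mn.1 • a + mn.2 • b
  let K : AddSubgroup Pt :=
    { carrier := Set.range phi
      zero_mem' := ⟨(0, 0), by simp [phi]⟩
      add_mem' := by
        rintro _ _ ⟨m, rfl⟩ ⟨n, rfl⟩
        refine ⟨m + n, ?_⟩
        simp only [phi, Prod.fst_add, Prod.snd_add, add_zsmul]
        abel
      neg_mem' := by
        rintro _ ⟨m, rfl⟩
        refine ⟨-m, ?_⟩
        simp only [phi, Prod.fst_neg, Prod.snd_neg, neg_zsmul]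
        abel }
  have hle : AddSubgroup.closure {a, b} ≤ K := by
    rw [AddSubgroup.closure_le]
    rintro x (rfl | rfl)
    · exact ⟨(1, 0), by simp [phi]⟩
    · exact ⟨(0, 1), by simp [phi]⟩
  have hK : Countable K := (Set.countable_range phi).to_subtype
  exact (AddSubgroup.inclusion_injective hle).countable

/-- Negation on `Pt × ℝ` is measure preserving. -/
lemma negMP : MeasurePreserving (fun p : Pt × ℝ => -p) volume volume := by
  have h1 : MeasurePreserving (fun x : ℝ => -x) (volume : Measure ℝ) volume :=
    Measure.measurePreserving_neg _
  have h2 : MeasurePreserving (fun p : Pt => -p) volume volume := by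
    have := h1.prod h1
    rwa [← Measure.volume_eq_prod] at this
  have := h2.prod h1
  rwa [← Measure.volume_eq_prod] at this

/-- for f, g 𝕃-periodic and odd in z,
((f,g))_d^{+−}(X) = ((CPg, CPf))_d^{+−}(X) where (CPf)(x,z) = conj(f(−x,z)). -/
theorem stmt11 (a0 d : ℝ) (ha0 : 0 < a0) (hd : 0 < d) (Ω : Set Pt)
    (hΩ : IsAddFundamentalDomain (lat a0) Ω volume)
    (f g : Pt → ℝ → ℂ)
    (hf : LPeriodic a0 f) (hg : LPeriodic a0 g)
    (hfodd : ∀ (x : Pt) (z : ℝ), f x (-z) = -f x z)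
    (hgodd : ∀ (x : Pt) (z : ℝ), g x (-z) = -g x z)
    (hint : ∀ X : Pt,
      IntegrableOn (braFn d 1 (-1) f g X) (Ω ×ˢ (Set.univ : Set ℝ)) volume) :
    ∀ X : Pt, bra d Ω 1 (-1) f g X =
      bra d Ω 1 (-1) (fun x z => (starRingEnd ℂ) (g (-x) z))
        (fun x z => (starRingEnd ℂ) (f (-x) z)) X := by
  intro X
  classical
  set L := lat a0 with hL
  set G := L.prod (⊥ : AddSubgroup ℝ) with hGdef
  set F : Pt × ℝ → ℂ := braFn d 1 (-1) f g X with hFdef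
  haveI hcL : Countable L := countable_closure_pair _ _
  haveI hli : (volume : Measure (Pt × ℝ)).IsAddLeftInvariant := by
    rw [Measure.volume_eq_prod]; infer_instance
  -- the bijection between L and G
  let e : L → G := fun R => ⟨((R : Pt), 0), by
    rw [AddSubgroup.mem_prod]; exact ⟨R.2, AddSubgroup.zero_mem _⟩⟩
  have he : Function.Bijective e := by
    constructor
    · intro R R' h
      apply Subtype.ext
      have := congrArg (fun g : G => (g : Pt × ℝ).1) h
      simpa [e] using this
    · rintro ⟨⟨v, t⟩, hm⟩
      rw [AddSubgroup.mem_prod] at hm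
      have ht : t = 0 := by simpa using hm.2
      exact ⟨⟨v, hm.1⟩, by simp [e, ht]⟩
  haveI hcG : Countable G := Countable.of_equiv _ (Equiv.ofBijective e he)
  -- fundamental domain of G in the product
  have hfst : Measure.QuasiMeasurePreserving (Prod.fst : Pt × ℝ → Pt) volume volume := by
    rw [Measure.volume_eq_prod (α := Pt) (β := ℝ)]
    exact Measure.quasiMeasurePreserving_fst
  have hP1 : IsAddFundamentalDomain G (Ω ×ˢ (Set.univ : Set ℝ)) volume := by
    have h := hΩ.preimage_of_equiv (f := (Prod.fst : Pt × ℝ → Pt)) hfst (e := e) he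
      (fun R p => rfl)
    have hpre : (Prod.fst : Pt × ℝ → Pt) ⁻¹' Ω = Ω ×ˢ (Set.univ : Set ℝ) := by
      ext p; simp
    rwa [hpre] at h
  -- the reflected fundamental domain
  set T : Set Pt := (fun x : Pt => -x) ⁻¹' Ω with hTdef
  have hpre2 : (fun p : Pt × ℝ => -p) ⁻¹' (Ω ×ˢ (Set.univ : Set ℝ))
      = T ×ˢ (Set.univ : Set ℝ) := by
    ext ⟨x, z⟩; simp [hTdef]
  have hP2 : IsAddFundamentalDomain G (T ×ˢ (Set.univ : Set ℝ)) volume := by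
    have h := hP1.preimage_of_equiv (f := fun p : Pt × ℝ => -p)
      negMP.quasiMeasurePreserving (e := fun g : G => -g)
      (neg_involutive.bijective) (fun g p => by
        show -(((-g : G) : Pt × ℝ) + p) = (g : Pt × ℝ) + -p
        push_cast
        abel)
    rwa [hpre2] at h
  -- invariance of the integrand under G
  have hFinv : ∀ (g : G) (p : Pt × ℝ), F (g +ᵥ p) = F p := by
    rintro ⟨⟨v, t⟩, hm⟩ ⟨x, z⟩
    rw [AddSubgroup.mem_prod] at hm
    have ht : t = 0 := by simpa using hm.2
    subst ht
    have hv : v ∈ lat a0 := hm.1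
    show F ((v, (0 : ℝ)) + (x, z)) = F (x, z)
    have hx1 : (v + x) - ((1 : ℝ) / 2) • Jmat X = (x - ((1 : ℝ) / 2) • Jmat X) + v := by
      abel
    have hx2 : (v + x) - ((-1 : ℝ) / 2) • Jmat X = (x - ((-1 : ℝ) / 2) • Jmat X) + v := by
      abel
    simp only [hFdef, braFn, Prod.mk_add_mk, zero_add]
    rw [hx1, hx2, hf v hv, hg v hv]
  -- pointwise identity for the CP integrand
  have hpt : ∀ p : Pt × ℝ,
      braFn d 1 (-1) (fun x z => (starRingEnd ℂ) (g (-x) z))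
        (fun x z => (starRingEnd ℂ) (f (-x) z)) X p = F (-p) := by
    rintro ⟨x, z⟩
    have ez1 : -z - 1 * d / 2 = -(z - (-1) * d / 2) := by ring
    have ez2 : -z - (-1) * d / 2 = -(z - 1 * d / 2) := by ring
    have hJ : ((-1 : ℝ) / 2) • Jmat X = -(((1 : ℝ) / 2) • Jmat X) := by
      rw [← neg_smul]; norm_num
    have ex1 : (-x : Pt) - ((1 : ℝ) / 2) • Jmat X = -(x - ((-1 : ℝ) / 2) • Jmat X) := by
      rw [hJ]; abel
    have ex2 : (-x : Pt) - ((-1 : ℝ) / 2) • Jmat X = -(x - ((1 : ℝ) / 2) • Jmat X) := by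
      rw [hJ]; abel
    show (starRingEnd ℂ) ((starRingEnd ℂ) (g (-(x - ((1 : ℝ) / 2) • Jmat X)) (z - 1 * d / 2))) *
        (starRingEnd ℂ) (f (-(x - ((-1 : ℝ) / 2) • Jmat X)) (z - (-1) * d / 2))
        = (starRingEnd ℂ) (f ((-x : Pt) - ((1 : ℝ) / 2) • Jmat X) (-z - 1 * d / 2)) *
          g ((-x : Pt) - ((-1 : ℝ) / 2) • Jmat X) (-z - (-1) * d / 2)
    rw [ex1, ex2, ez1, ez2, hfodd, hgodd, Complex.conj_conj, map_neg]
    ring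
  -- change of variables on the right-hand side
  have key : bra d Ω 1 (-1) (fun x z => (starRingEnd ℂ) (g (-x) z))
      (fun x z => (starRingEnd ℂ) (f (-x) z)) X
      = ∫ p in T ×ˢ (Set.univ : Set ℝ), F p := by
    have h1 : bra d Ω 1 (-1) (fun x z => (starRingEnd ℂ) (g (-x) z))
        (fun x z => (starRingEnd ℂ) (f (-x) z)) X
        = ∫ p in Ω ×ˢ (Set.univ : Set ℝ), F (-p) := by
      unfold bra
      exact integral_congr_ae (Filter.Eventually.of_forall fun p => hpt p)
    rw [h1, ← hpre2]
    calc ∫ p in Ω ×ˢ (Set.univ : Set ℝ), F (-p)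
        = ∫ p in (fun q : Pt × ℝ => -q) ⁻¹' ((fun q : Pt × ℝ => -q) ⁻¹'
            (Ω ×ˢ (Set.univ : Set ℝ))), F (-p) := by
          rw [Set.preimage_preimage]; simp
      _ = ∫ p in (fun q : Pt × ℝ => -q) ⁻¹' (Ω ×ˢ (Set.univ : Set ℝ)), F p :=
          negMP.setIntegral_preimage_emb
            ((MeasurableEquiv.neg (Pt × ℝ)).measurableEmbedding) F _
  rw [key]
  unfold bra
  exact hP1.setIntegral_eq hP2 hFinv
end
end

section
/- Let Φ : ℝ² × ℝ → ℂ be continuously differentiable, K-quasiperiodic, with Φ and its in-plane gradient ∇ₓΦ square-integrable on Ω × ℝ, and suppose Φ(R_{2π/3}⁻¹ x, z) = ω Φ(x, z) for all (x,z), where ω := e^{2πi/3}. Then ∫_{Ω×ℝ} conj(Φ(x,z)) · (−i ∇ₓΦ)(x,z) dx dz = (0, 0) in ℂ². The same conclusion holds if instead Φ(R_{2π/3}⁻¹ x, z) = ω̄ Φ(x, z). -/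
noncomputable section

open MeasureTheory Real Complex

/-- In-plane partial derivative ∂/∂x₁. -/
def dX1 (f : Pt → ℝ → ℂ) (x : Pt) (z : ℝ) : ℂ :=
  fderiv ℝ (fun y => f y z) x ((1 : ℝ), (0 : ℝ))

/-- In-plane partial derivative ∂/∂x₂. -/
def dX2 (f : Pt → ℝ → ℂ) (x : Pt) (z : ℝ) : ℂ :=
  fderiv ℝ (fun y => f y z) x ((0 : ℝ), (1 : ℝ))

/-!
Write `ρ_w(x, z) = conj Φ(x, z) · ∂_w Φ(x, z)` and `S` for the rotation by `-2π/3`. Since the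
quasiperiodic phase `e^{iK·R}` and the eigenvalue `ω` (or `ω̄`) have modulus one, `ρ_w` is
`𝕃`-periodic in `x` and `ρ_{Sw}(Sx, z) = ρ_w(x, z)`. As `S` maps `𝕃` onto itself and preserves
volume, `SΩ` is again a fundamental domain, so `I(w) = ∫_{Ω×ℝ} ρ_w` satisfies `I(Sw) = I(w)`.
Finally `w + Sw + S²w = 0` and `I` is additive, hence `3 I(w) = 0`.
-/

open ComplexConjugate

lemma rotA_rotA (θ φ : ℝ) (v : Pt) : rotA θ (rotA φ v) = rotA (θ + φ) v := by
  simp only [rotA, Real.cos_add, Real.sin_add, Prod.mk.injEq]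
  constructor <;> ring

lemma rotA_zero (v : Pt) : rotA 0 v = v := by simp [rotA]

def rotCLE (θ : ℝ) : Pt ≃L[ℝ] Pt where
  toFun := rotA θ
  invFun := rotA (-θ)
  map_add' v w := by ext <;> simp only [rotA, Prod.fst_add, Prod.snd_add] <;> ring
  map_smul' r v := by
    ext <;> simp only [rotA, Prod.smul_fst, Prod.smul_snd, smul_eq_mul, RingHom.id_apply] <;> ring
  left_inv v := by rw [rotA_rotA, neg_add_cancel, rotA_zero]
  right_inv v := by rw [rotA_rotA, add_neg_cancel, rotA_zero]
  continuous_toFun := by unfold rotA; fun_prop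
  continuous_invFun := by unfold rotA; fun_prop

@[simp] lemma rotCLE_apply (θ : ℝ) (v : Pt) : rotCLE θ v = rotA θ v := rfl

lemma det_rotCLE (θ : ℝ) : LinearMap.det (rotCLE θ : Pt →ₗ[ℝ] Pt) = 1 := by
  rw [← LinearMap.det_toMatrix (Module.Basis.finTwoProd ℝ), Matrix.det_fin_two]
  simp only [LinearMap.toMatrix_apply, Module.Basis.finTwoProd_zero, Module.Basis.finTwoProd_one,
    Module.Basis.coe_finTwoProd_repr, LinearEquiv.coe_coe, ContinuousLinearEquiv.coe_toLinearEquiv,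
    rotCLE_apply, rotA]
  simp only [Fin.isValue, Matrix.cons_val_zero, Matrix.cons_val_one, Matrix.cons_val_fin_one]
  linear_combination Real.cos_sq_add_sin_sq θ

lemma measurePreserving_rotCLE (θ : ℝ) :
    MeasurePreserving (rotCLE θ) (volume : Measure Pt) volume := by
  have hdet : LinearMap.det (rotCLE θ : Pt →ₗ[ℝ] Pt) ≠ 0 := by simp [det_rotCLE]
  refine ⟨(rotCLE θ).continuous.measurable, ?_⟩
  have h := Measure.map_linearMap_addHaar_eq_smul_addHaar (volume : Measure Pt) hdet
  rw [det_rotCLE] at h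
  simpa using h

lemma add_rotA_add_rotA_rotA {θ : ℝ} (hθ : Real.cos θ = -(1 / 2)) (v : Pt) :
    v + rotA θ v + rotA θ (rotA θ v) = 0 := by
  have hsc := Real.sin_sq_add_cos_sq θ
  rw [hθ] at hsc
  ext <;> simp only [rotA, hθ, Prod.fst_add, Prod.snd_add, Prod.fst_zero, Prod.snd_zero]
  · linear_combination (-v.1) * hsc
  · linear_combination (-v.2) * hsc

lemma cos_neg_two_pi_div_three : Real.cos (-(2 * π / 3)) = -(1 / 2) := by
  rw [Real.cos_neg, show 2 * π / 3 = π - π / 3 by ring, Real.cos_pi_sub, Real.cos_pi_div_three]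

lemma sin_neg_two_pi_div_three : Real.sin (-(2 * π / 3)) = -(√3 / 2) := by
  rw [Real.sin_neg, show 2 * π / 3 = π - π / 3 by ring, Real.sin_pi_sub, Real.sin_pi_div_three]

lemma rotA_neg_two_pi_div_three_av1 (a0 : ℝ) :
    rotA (-(2 * π / 3)) (av1 a0) = -(av1 a0 + av2 a0) := by
  have h3 : √3 ^ 2 = 3 := Real.sq_sqrt (by norm_num)
  simp only [rotA, av1, av2, cos_neg_two_pi_div_three, sin_neg_two_pi_div_three, Prod.mk_add_mk,
    Prod.neg_mk, Prod.mk.injEq]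
  constructor
  · linear_combination (-(a0 / 4)) * h3
  · ring

lemma rotA_neg_two_pi_div_three_av2 (a0 : ℝ) : rotA (-(2 * π / 3)) (av2 a0) = av1 a0 := by
  have h3 : √3 ^ 2 = 3 := Real.sq_sqrt (by norm_num)
  simp only [rotA, av1, av2, cos_neg_two_pi_div_three, sin_neg_two_pi_div_three, Prod.mk.injEq]
  constructor
  · linear_combination (a0 / 4) * h3
  · ring

lemma av1_mem_lat (a0 : ℝ) : av1 a0 ∈ lat a0 := AddSubgroup.subset_closure (by simp)

lemma av2_mem_lat (a0 : ℝ) : av2 a0 ∈ lat a0 := AddSubgroup.subset_closure (by simp)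

instance inst_s13 (a0 : ℝ) : Countable (lat a0) := by
  let f : ℤ × ℤ →+ Pt := (zmultiplesHom Pt (av1 a0)).coprod (zmultiplesHom Pt (av2 a0))
  have hle : lat a0 ≤ f.range := by
    refine (AddSubgroup.closure_le _).2 ?_
    rintro v (rfl | rfl)
    exacts [⟨(1, 0), by simp [f]⟩, ⟨(0, 1), by simp [f]⟩]
  exact ((Set.countable_range f).mono hle).to_subtype

lemma lat_le_comap_rotCLE (a0 : ℝ) :
    lat a0 ≤ (lat a0).comap (rotCLE (-(2 * π / 3)) : Pt →+ Pt) := by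
  refine (AddSubgroup.closure_le _).2 ?_
  rintro v (rfl | rfl)
  · show rotA _ (av1 a0) ∈ lat a0
    rw [rotA_neg_two_pi_div_three_av1]
    exact neg_mem (add_mem (av1_mem_lat a0) (av2_mem_lat a0))
  · show rotA _ (av2 a0) ∈ lat a0
    rw [rotA_neg_two_pi_div_three_av2]
    exact av1_mem_lat a0

lemma rotA_neg_two_pi_div_three_mem_lat_iff (a0 : ℝ) (v : Pt) :
    rotA (-(2 * π / 3)) v ∈ lat a0 ↔ v ∈ lat a0 := by
  refine ⟨fun hv => ?_, fun hv => lat_le_comap_rotCLE a0 hv⟩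
  have hv' : rotA (-(2 * π / 3)) (rotA (-(2 * π / 3)) v) ∈ lat a0 := lat_le_comap_rotCLE a0 hv
  have hsum := add_rotA_add_rotA_rotA cos_neg_two_pi_div_three v
  rw [add_assoc] at hsum
  rw [eq_neg_of_add_eq_zero_left hsum]
  exact neg_mem (add_mem hv hv')

theorem MeasureTheory.IsAddFundamentalDomain.setIntegral_comp_continuousLinearEquiv
    {E F : Type*} [NormedAddCommGroup E] [NormedSpace ℝ E] [MeasurableSpace E] [BorelSpace E]
    [NormedAddCommGroup F] [NormedSpace ℝ F] {μ : Measure E} {L : AddSubgroup E} [Countable L]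
    [VAddInvariantMeasure L E μ] {Ω : Set E} (hΩ : IsAddFundamentalDomain L Ω μ)
    (T : E ≃L[ℝ] E) (hT : MeasurePreserving T μ μ) (hTL : ∀ v, T v ∈ L ↔ v ∈ L) {f : E → F}
    (hf : ∀ v ∈ L, ∀ x, f (x + v) = f x) :
    ∫ x in Ω, f (T x) ∂μ = ∫ x in Ω, f x ∂μ := by
  let e : L ≃ L :=
    { toFun g := ⟨T.symm g, (hTL _).1 (by simp)⟩
      invFun g := ⟨T g, (hTL _).2 g.2⟩
      left_inv g := by ext; simp
      right_inv g := by ext; simp }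
  have hTΩ : IsAddFundamentalDomain L (T '' Ω) μ := by
    refine hΩ.image_of_equiv T.toEquiv ?_ e fun g x => ?_
    · exact (hT.symm T.toHomeomorph.toMeasurableEquiv).quasiMeasurePreserving
    · simp [e, AddSubgroup.vadd_def]
  have hf' (g : L) (x : E) : f (g +ᵥ x) = f x := by
    rw [AddSubgroup.vadd_def, vadd_eq_add, add_comm]
    exact hf g g.2 x
  calc ∫ x in Ω, f (T x) ∂μ = ∫ y in T '' Ω, f y ∂μ :=
        (hT.setIntegral_image_emb T.toHomeomorph.measurableEmbedding f Ω).symm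
    _ = ∫ x in Ω, f x ∂μ := (hΩ.setIntegral_eq hTΩ hf').symm

lemma fderiv_apply_of_comp_affine_eq_mul {E : Type*} [NormedAddCommGroup E] [NormedSpace ℝ E]
    {f : E → ℂ} (A : E ≃L[ℝ] E) (b : E) (c : ℂ) (h : ∀ x, f (A x + b) = c * f x) (x w : E) :
    fderiv ℝ f (A x + b) (A w) = c * fderiv ℝ f x w := by
  have hcomp : (fun y => f (A y + b)) = (fun y => f (y + b)) ∘ A := rfl
  have key : (fderiv ℝ f (A x + b)).comp (A : E →L[ℝ] E) = c • fderiv ℝ f x := by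
    rw [← fderiv_comp_add_right, ← A.comp_right_fderiv, ← hcomp, funext h]
    exact congrFun (fderiv_const_smul_field c) x
  simpa using congrArg (fun L : E →L[ℝ] ℂ => L w) key

def conjMulFDeriv {E Z : Type*} [NormedAddCommGroup E] [NormedSpace ℝ E] (Φ : E → Z → ℂ)
    (w : E) (p : E × Z) : ℂ :=
  conj (Φ p.1 p.2) * fderiv ℝ (fun y => Φ y p.2) p.1 w

lemma conjMulFDeriv_comp_affine {E Z : Type*} [NormedAddCommGroup E] [NormedSpace ℝ E]
    {Φ : E → Z → ℂ} (A : E ≃L[ℝ] E) (b : E) {c : ℂ} (hc : ‖c‖ = 1)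
    (h : ∀ x z, Φ (A x + b) z = c * Φ x z) (w x : E) (z : Z) :
    conjMulFDeriv Φ (A w) (A x + b, z) = conjMulFDeriv Φ w (x, z) := by
  have hcc : conj c * c = 1 := by rw [Complex.conj_mul', hc]; simp
  simp only [conjMulFDeriv, h x z,
    fderiv_apply_of_comp_affine_eq_mul (f := fun y => Φ y z) A b c (fun y => h y z), map_mul]
  linear_combination (conj (Φ x z) * fderiv ℝ (fun y => Φ y z) x w) * hcc

lemma conjMulFDeriv_eq (Φ : Pt → ℝ → ℂ) (w : Pt) (p : Pt × ℝ) :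
    conjMulFDeriv Φ w p = w.1 * (conj (Φ p.1 p.2) * dX1 Φ p.1 p.2)
      + w.2 * (conj (Φ p.1 p.2) * dX2 Φ p.1 p.2) := by
  have hw : w = w.1 • ((1 : ℝ), (0 : ℝ)) + w.2 • ((0 : ℝ), (1 : ℝ)) := by simp
  conv_lhs => rw [conjMulFDeriv, hw, map_add, map_smul, map_smul, Complex.real_smul,
    Complex.real_smul]
  rw [dX1, dX2]
  ring

lemma integrable_conjMulFDeriv {μ : Measure (Pt × ℝ)} {Φ : Pt → ℝ → ℂ}
    (hΦ : MemLp (fun p : Pt × ℝ => Φ p.1 p.2) 2 μ)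
    (hΦd1 : MemLp (fun p : Pt × ℝ => dX1 Φ p.1 p.2) 2 μ)
    (hΦd2 : MemLp (fun p : Pt × ℝ => dX2 Φ p.1 p.2) 2 μ) (w : Pt) :
    Integrable (conjMulFDeriv Φ w) μ := by
  have h1 := hΦ.star.integrable_mul hΦd1
  have h2 := hΦ.star.integrable_mul hΦd2
  simp_rw [funext (conjMulFDeriv_eq Φ w)]
  exact (h1.const_mul _).add (h2.const_mul _)

lemma eq_zero_of_map_add_of_rotA_invariant {θ : ℝ} (hθ : Real.cos θ = -(1 / 2)) {ℓ : Pt → ℂ}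
    (hadd : ∀ u v, ℓ (u + v) = ℓ u + ℓ v) (hrot : ∀ w, ℓ (rotA θ w) = ℓ w) (w : Pt) :
    ℓ w = 0 := by
  have h0 : ℓ 0 = 0 := by simpa using hadd 0 0
  have h3 := congrArg ℓ (add_rotA_add_rotA_rotA hθ w)
  simp only [hadd, hrot, h0] at h3
  linear_combination h3 / 3

lemma setIntegral_conjMulFDeriv_rotA {a0 : ℝ} {Ω : Set Pt}
    (hΩ : IsAddFundamentalDomain (lat a0) Ω volume) {Φ : Pt → ℝ → ℂ}
    (hΦq : KQuasiperiodic a0 Φ) {c : ℂ} (hc : ‖c‖ = 1)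
    (hrot : ∀ x z, Φ (rotA (-(2 * π / 3)) x) z = c * Φ x z)
    (hint : ∀ w, Integrable (conjMulFDeriv Φ w) (volume.restrict (Ω ×ˢ Set.univ))) (w : Pt) :
    ∫ p in Ω ×ˢ Set.univ, conjMulFDeriv Φ (rotA (-(2 * π / 3)) w) p
      = ∫ p in Ω ×ˢ Set.univ, conjMulFDeriv Φ w p := by
  have hper (v R : Pt) (hR : R ∈ lat a0) (x : Pt) (z : ℝ) :
      conjMulFDeriv Φ v (x + R, z) = conjMulFDeriv Φ v (x, z) :=
    conjMulFDeriv_comp_affine (ContinuousLinearEquiv.refl ℝ Pt) R (norm_exp_I_mul_ofReal _)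
      (hΦq R hR) v x z
  have hrot' (x : Pt) (z : ℝ) :
      conjMulFDeriv Φ (rotA (-(2 * π / 3)) w) (rotCLE (-(2 * π / 3)) x, z)
        = conjMulFDeriv Φ w (x, z) := by
    have h := conjMulFDeriv_comp_affine (rotCLE (-(2 * π / 3))) 0 hc
      (fun x z => by rw [add_zero]; exact hrot x z) w x z
    rw [add_zero] at h
    exact h
  rw [Measure.volume_eq_prod, setIntegral_prod _ (hint _), setIntegral_prod _ (hint _),
    ← hΩ.setIntegral_comp_continuousLinearEquiv (rotCLE _) (measurePreserving_rotCLE _)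
      (rotA_neg_two_pi_div_three_mem_lat_iff a0) fun R hR x => by simp_rw [hper _ R hR x]]
  simp_rw [hrot']

lemma norm_ωc : ‖ωc‖ = 1 := by
  rw [ωc, show 2 * π * I / 3 = I * ((2 * π / 3 : ℝ) : ℂ) by push_cast; ring]
  exact norm_exp_I_mul_ofReal _

theorem stmt13_general (a0 : ℝ) (Ω : Set Pt)
    (hΩ : IsAddFundamentalDomain (lat a0) Ω volume)
    (Φ : Pt → ℝ → ℂ)
    (hΦq : KQuasiperiodic a0 Φ)
    (hΦ2 : MemLp (fun p : Pt × ℝ => Φ p.1 p.2) 2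
      (volume.restrict (Ω ×ˢ (Set.univ : Set ℝ))))
    (hΦd1 : MemLp (fun p : Pt × ℝ => dX1 Φ p.1 p.2) 2
      (volume.restrict (Ω ×ˢ (Set.univ : Set ℝ))))
    (hΦd2 : MemLp (fun p : Pt × ℝ => dX2 Φ p.1 p.2) 2
      (volume.restrict (Ω ×ˢ (Set.univ : Set ℝ))))
    (hsym : (∀ (x : Pt) (z : ℝ), Φ (rotA (-(2 * π / 3)) x) z = ωc * Φ x z) ∨
            (∀ (x : Pt) (z : ℝ), Φ (rotA (-(2 * π / 3)) x) z = (starRingEnd ℂ) ωc * Φ x z)) :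
    (∫ p in Ω ×ˢ (Set.univ : Set ℝ),
        (starRingEnd ℂ) (Φ p.1 p.2) * (-Complex.I * dX1 Φ p.1 p.2)) = 0 ∧
    (∫ p in Ω ×ˢ (Set.univ : Set ℝ),
        (starRingEnd ℂ) (Φ p.1 p.2) * (-Complex.I * dX2 Φ p.1 p.2)) = 0 := by
  obtain ⟨c, hc, hrot⟩ : ∃ c : ℂ, ‖c‖ = 1 ∧ ∀ x z, Φ (rotA (-(2 * π / 3)) x) z = c * Φ x z := by
    rcases hsym with h | h
    exacts [⟨ωc, norm_ωc, h⟩, ⟨conj ωc, by rw [RCLike.norm_conj, norm_ωc], h⟩]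
  have hint := integrable_conjMulFDeriv hΦ2 hΦd1 hΦd2
  have hzero := eq_zero_of_map_add_of_rotA_invariant cos_neg_two_pi_div_three
    (ℓ := fun w => ∫ p in Ω ×ˢ Set.univ, conjMulFDeriv Φ w p)
    (fun u v => by
      simp only [conjMulFDeriv, map_add, mul_add]
      exact integral_add (hint u) (hint v))
    (setIntegral_conjMulFDeriv_rotA hΩ hΦq hc hrot hint)
  have hI (w : Pt) : ∫ p in Ω ×ˢ Set.univ,
      conj (Φ p.1 p.2) * (-I * fderiv ℝ (fun y => Φ y p.2) p.1 w) = 0 := by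
    calc _ = -I * ∫ p in Ω ×ˢ Set.univ, conjMulFDeriv Φ w p := by
          rw [← integral_const_mul]
          congr with p
          rw [conjMulFDeriv]
          ring
      _ = 0 := by rw [hzero, mul_zero]
  exact ⟨hI (1, 0), hI (0, 1)⟩

/-- if Φ(R_{2π/3}⁻¹ x, z) = ω Φ(x,z) (or with ω̄ instead of ω), then
∫_{Ω×ℝ} conj(Φ) (−i∇ₓΦ) = (0,0). -/
theorem stmt13 (a0 : ℝ) (ha0 : 0 < a0) (Ω : Set Pt)
    (hΩ : IsAddFundamentalDomain (lat a0) Ω volume)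
    (Φ : Pt → ℝ → ℂ)
    (hΦc : ContDiff ℝ 1 (fun p : Pt × ℝ => Φ p.1 p.2))
    (hΦq : KQuasiperiodic a0 Φ)
    (hΦ2 : MemLp (fun p : Pt × ℝ => Φ p.1 p.2) 2
      (volume.restrict (Ω ×ˢ (Set.univ : Set ℝ))))
    (hΦd1 : MemLp (fun p : Pt × ℝ => dX1 Φ p.1 p.2) 2
      (volume.restrict (Ω ×ˢ (Set.univ : Set ℝ))))
    (hΦd2 : MemLp (fun p : Pt × ℝ => dX2 Φ p.1 p.2) 2
      (volume.restrict (Ω ×ˢ (Set.univ : Set ℝ))))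
    (hsym : (∀ (x : Pt) (z : ℝ), Φ (rotA (-(2 * π / 3)) x) z = ωc * Φ x z) ∨
            (∀ (x : Pt) (z : ℝ), Φ (rotA (-(2 * π / 3)) x) z = (starRingEnd ℂ) ωc * Φ x z)) :
    (∫ p in Ω ×ˢ (Set.univ : Set ℝ),
        (starRingEnd ℂ) (Φ p.1 p.2) * (-Complex.I * dX1 Φ p.1 p.2)) = 0 ∧
    (∫ p in Ω ×ˢ (Set.univ : Set ℝ),
        (starRingEnd ℂ) (Φ p.1 p.2) * (-Complex.I * dX2 Φ p.1 p.2)) = 0 :=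
  stmt13_general a0 Ω hΩ Φ hΦq hΦ2 hΦd1 hΦd2 hsym
end
end

section
/- Let Φ₁, Φ₂ : ℝ² × ℝ → ℂ be continuously differentiable, K-quasiperiodic, with Φ₁, Φ₂ and their in-plane gradients square-integrable on Ω × ℝ, and suppose there exists s ∈ {+1, −1} such that Φ₂(x₁, x₂, z) = s · Φ₁(x₁, −x₂, −z) for all (x₁, x₂, z). Then the complex number v := ∫_{Ω×ℝ} conj(Φ₁(x,z)) · (−i ∂_{x₁}Φ₂)(x,z) dx dz is real: v = conj(v). -/
noncomputable section

open MeasureTheory Real Complex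

/-!
With `A = ∫ conj Φ₁ · ∂₁Φ₂` over `Ω × ℝ` we have `v = -i A`, so the claim is `conj A = -A`.
Both factors of `conj Φ₁ · Φ₂` pick up the same unimodular phase under `𝕃`, so the product is
periodic and its `x₁`-derivative integrates to `0` over a fundamental domain:
`A + ∫ conj (∂₁Φ₁) · Φ₂ = 0`. The map `ρ (x₁, x₂, z) = (x₁, -x₂, -z)` preserves volume and `𝕃`
and fixes the `x₁`-direction; since `Φ₂ = s · Φ₁ ∘ ρ` and `s² = 1`, the change of variables `ρ`
turns `∫ conj (∂₁Φ₁) · Φ₂` into `∫ conj (∂₁Φ₂) · Φ₁ = conj A`.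
-/

open Set

namespace MeasureTheory.IsAddFundamentalDomain

section Action

variable {G α E : Type*} [AddGroup G] [MeasurableSpace α] [AddAction G α] {μ : Measure α}
  [NormedAddCommGroup E] {s : Set α} {f : α → E}

theorem image_of_measurePreserving (hs : IsAddFundamentalDomain G s μ) (T : α ≃ᵐ α)
    (hT : MeasurePreserving T μ μ) (e : G ≃ G) (hTe : ∀ g x, T (e g +ᵥ x) = g +ᵥ T x) :
    IsAddFundamentalDomain G (T '' s) μ :=
  hs.image_of_equiv T.toEquiv (hT.symm T).quasiMeasurePreserving e hTe

variable [Countable G] [MeasurableConstVAdd G α] [VAddInvariantMeasure G α μ]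

theorem integrableOn_comp_iff (hs : IsAddFundamentalDomain G s μ) (T : α ≃ᵐ α)
    (hT : MeasurePreserving T μ μ) (e : G ≃ G) (hTe : ∀ g x, T (e g +ᵥ x) = g +ᵥ T x)
    (hf : ∀ (g : G) x, f (g +ᵥ x) = f x) :
    IntegrableOn (f ∘ T) s μ ↔ IntegrableOn f s μ :=
  (hT.integrableOn_image T.measurableEmbedding).symm.trans
    ((hs.image_of_measurePreserving T hT e hTe).integrableOn_iff hs hf)

theorem setIntegral_comp [NormedSpace ℝ E] (hs : IsAddFundamentalDomain G s μ) (T : α ≃ᵐ α)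
    (hT : MeasurePreserving T μ μ) (e : G ≃ G) (hTe : ∀ g x, T (e g +ᵥ x) = g +ᵥ T x)
    (hf : ∀ (g : G) x, f (g +ᵥ x) = f x) :
    ∫ x in s, f (T x) ∂μ = ∫ x in s, f x ∂μ :=
  (hT.setIntegral_image_emb T.measurableEmbedding f s).symm.trans
    ((hs.image_of_measurePreserving T hT e hTe).setIntegral_eq hs hf)

end Action

theorem prod_univ {V W : Type*} [AddGroup V] [AddGroup W] [MeasurableSpace V]
    [MeasurableSpace W] {L : AddSubgroup V} {s : Set V} {μ : Measure V} (ν : Measure W)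
    (hs : IsAddFundamentalDomain L s μ) :
    IsAddFundamentalDomain (L.prod (⊥ : AddSubgroup W)) (s ×ˢ univ) (μ.prod ν) := by
  rw [Set.prod_univ]
  refine hs.preimage_of_equiv Measure.quasiMeasurePreserving_fst
    (e := fun g => ⟨((g : V), 0), AddSubgroup.mem_prod.2 ⟨g.2, zero_mem _⟩⟩) ⟨?_, ?_⟩
    fun g x => rfl
  · intro g h hgh
    exact Subtype.ext (congrArg (fun g => g.1.1) hgh)
  · rintro ⟨⟨x, w⟩, hxw⟩
    obtain ⟨hx, hw⟩ := AddSubgroup.mem_prod.1 hxw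
    obtain rfl : w = 0 := AddSubgroup.mem_bot.1 hw
    exact ⟨⟨x, hx⟩, rfl⟩

section Translation

variable {V E : Type*} [AddCommGroup V] [MeasurableSpace V] [MeasurableAdd V] {μ : Measure V}
  [μ.IsAddLeftInvariant] {L : AddSubgroup V} [Countable L] {s : Set V}
  [NormedAddCommGroup E] {f : V → E}

theorem integrableOn_comp_add_left (hs : IsAddFundamentalDomain L s μ)
    (hf : ∀ (g : L) x, f (g +ᵥ x) = f x) (q : V) :
    IntegrableOn (fun x => f (q + x)) s μ ↔ IntegrableOn f s μ :=
  hs.integrableOn_comp_iff (MeasurableEquiv.addLeft q) (measurePreserving_add_left μ q)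
    (Equiv.refl L) (fun _ _ => add_left_comm _ _ _) hf

theorem setIntegral_comp_add_left [NormedSpace ℝ E] (hs : IsAddFundamentalDomain L s μ)
    (hf : ∀ (g : L) x, f (g +ᵥ x) = f x) (q : V) :
    ∫ x in s, f (q + x) ∂μ = ∫ x in s, f x ∂μ :=
  hs.setIntegral_comp (MeasurableEquiv.addLeft q) (measurePreserving_add_left μ q)
    (Equiv.refl L) (fun _ _ => add_left_comm _ _ _) hf

end Translation

section NormedSpace

variable {V E : Type*} [NormedAddCommGroup V] [NormedSpace ℝ V] [MeasurableSpace V]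
  [BorelSpace V] {μ : Measure V} [μ.IsAddLeftInvariant] {L : AddSubgroup V} [Countable L]
  {s : Set V} [NormedAddCommGroup E] [NormedSpace ℝ E]

theorem setIntegral_comp_continuousLinearEquiv_s15 (hs : IsAddFundamentalDomain L s μ)
    (A : V ≃L[ℝ] V) (hA : MeasurePreserving A μ μ) (hAL : ∀ x, A x ∈ L ↔ x ∈ L) {f : V → E}
    (hf : ∀ (g : L) x, f (g +ᵥ x) = f x) :
    ∫ x in s, f (A x) ∂μ = ∫ x in s, f x ∂μ :=
  hs.setIntegral_comp A.toHomeomorph.toMeasurableEquiv hA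
    { toFun g := ⟨A.symm g, by rw [← hAL]; simp⟩
      invFun g := ⟨A g, (hAL g).2 g.2⟩
      left_inv g := by simp
      right_inv g := by simp }
    (fun g x => by simp [AddSubgroup.vadd_def]) hf

/-- Integrating `F (v + x) - F x = ∫₀¹ ∂ᵥF (t • v + x) dt` over `s` and swapping the integrals,
both sides are computed by translation invariance of integrals of periodic functions over `s`. -/
theorem setIntegral_fderiv_apply_eq_zero [SecondCountableTopology V] [SFinite μ]
    [CompleteSpace E] (hs : IsAddFundamentalDomain L s μ) {F : V → E} (hF : ContDiff ℝ 1 F)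
    (hFL : ∀ (g : L) x, F (g +ᵥ x) = F x) (v : V) (hFi : IntegrableOn F s μ)
    (hF'i : IntegrableOn (fun x => fderiv ℝ F x v) s μ) :
    ∫ x in s, fderiv ℝ F x v ∂μ = 0 := by
  set F' : V → E := fun x => fderiv ℝ F x v
  have hF'cont : Continuous F' := (hF.continuous_fderiv one_ne_zero).clm_apply continuous_const
  have hF'L : ∀ (g : L) x, F' (g +ᵥ x) = F' x := fun g x => by
    have hFg : (fun y => F (g + y)) = F := funext (hFL g)
    change fderiv ℝ F (g + x) v = fderiv ℝ F x v
    rw [← fderiv_comp_add_left, hFg]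
  have hFTC : ∀ x, F (v + x) - F x = ∫ t in Ioc (0 : ℝ) 1, F' (t • v + x) := fun x => by
    rw [← intervalIntegral.integral_of_le zero_le_one,
      intervalIntegral.integral_eq_sub_of_hasDerivAt (f := fun t : ℝ => F (t • v + x))]
    · simp
    · intro t _
      have hline : HasDerivAt (fun t : ℝ => t • v + x) v t := by
        simpa using ((hasDerivAt_id t).smul_const v).add_const x
      exact (hF.differentiable one_ne_zero _).hasFDerivAt.comp_hasDerivAt t hline
    · exact (hF'cont.comp (by fun_prop)).intervalIntegrable 0 1
  have hprod : Integrable (Function.uncurry fun t x => F' (t • v + x))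
      ((volume.restrict (Ioc (0 : ℝ) 1)).prod (μ.restrict s)) := by
    refine (integrable_prod_iff (hF'cont.comp (by fun_prop)).aestronglyMeasurable).2
      ⟨ae_of_all _ fun t => (hs.integrableOn_comp_add_left hF'L (t • v)).2 hF'i, ?_⟩
    have hnorm := fun t : ℝ => hs.setIntegral_comp_add_left
      (f := fun x => ‖F' x‖) (fun g x => by rw [hF'L]) (t • v)
    change Integrable (fun t : ℝ => ∫ x in s, ‖F' (t • v + x)‖ ∂μ) _
    simp only [hnorm]
    exact integrable_const _
  calc ∫ x in s, F' x ∂μ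
      = ∫ t in Ioc (0 : ℝ) 1, ∫ x in s, F' (t • v + x) ∂μ := by
        simp [hs.setIntegral_comp_add_left hF'L]
    _ = ∫ x in s, (F (v + x) - F x) ∂μ := by
        rw [integral_integral_swap hprod]
        simp only [hFTC]
    _ = 0 := by
        rw [integral_sub ((hs.integrableOn_comp_add_left hFL v).2 hFi) hFi,
          hs.setIntegral_comp_add_left hFL, sub_self]

end NormedSpace

end MeasureTheory.IsAddFundamentalDomain

theorem MeasureTheory.MemLp.integrable_starRingEnd_mul {α : Type*} [MeasurableSpace α]
    {μ : Measure α} {f g : α → ℂ} (hf : MemLp f 2 μ) (hg : MemLp g 2 μ) :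
    Integrable (fun x => starRingEnd ℂ (f x) * g x) μ :=
  hf.star.integrable_mul hg

section Calculus

variable {𝕜 V E : Type*} [NontriviallyNormedField 𝕜] [NormedAddCommGroup V] [NormedSpace 𝕜 V]
  [NormedAddCommGroup E] [NormedSpace 𝕜 E]

theorem fderiv_prodMk_left_apply {W : Type*} [NormedAddCommGroup W] [NormedSpace 𝕜 W]
    {F : V × W → E} {x : V} {z : W} (hF : DifferentiableAt 𝕜 F (x, z)) (v : V) :
    fderiv 𝕜 (fun y => F (y, z)) x v = fderiv 𝕜 F (x, z) (v, 0) := by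
  rw [show (fun y => F (y, z)) = F ∘ fun y => (y, z) from rfl,
    (hF.hasFDerivAt.comp x (hasFDerivAt_prodMk_left x z)).fderiv]
  simp

theorem fderiv_add_left_eq_smul {R : Type*} [DivisionSemiring R] [Module R E]
    [SMulCommClass 𝕜 R E] [ContinuousConstSMul R E] {F : V → E} {a : V} {c : R}
    (h : ∀ x, F (a + x) = c • F x) (x : V) :
    fderiv 𝕜 F (a + x) = c • fderiv 𝕜 F x := by
  rw [← fderiv_comp_add_left, show (fun x => F (a + x)) = c • F from funext h,
    fderiv_const_smul_field, Pi.smul_apply]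

end Calculus

theorem fderiv_starRingEnd_mul_apply {V : Type*} [NormedAddCommGroup V] [NormedSpace ℝ V]
    {f g : V → ℂ} {x : V} (hf : DifferentiableAt ℝ f x) (hg : DifferentiableAt ℝ g x) (v : V) :
    fderiv ℝ (fun x => starRingEnd ℂ (f x) * g x) x v =
      starRingEnd ℂ (fderiv ℝ f x v) * g x + starRingEnd ℂ (f x) * fderiv ℝ g x v := by
  rw [show (fun x => starRingEnd ℂ (f x) * g x) = (fun x => star (f x)) * g from rfl,
    (hf.hasFDerivAt.star.mul hg.hasFDerivAt).fderiv]
  simp [add_comm, mul_comm]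

namespace Graphene

variable {a0 : ℝ}

instance : (volume : Measure Pt).IsAddLeftInvariant := Measure.prod.instIsAddLeftInvariant

instance : (volume : Measure (Pt × ℝ)).IsAddLeftInvariant := Measure.prod.instIsAddLeftInvariant

instance (a0 : ℝ) : Countable (lat a0) := by
  refine ((Set.countable_range fun mn : ℤ × ℤ => mn.1 • av1 a0 + mn.2 • av2 a0).mono ?_).to_subtype
  intro x hx
  obtain ⟨m, n, h⟩ := AddSubgroup.mem_closure_pair.1 hx
  exact ⟨(m, n), h⟩

abbrev latSlab (a0 : ℝ) : AddSubgroup (Pt × ℝ) := (lat a0).prod ⊥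

instance (a0 : ℝ) : Countable (latSlab a0) :=
  Countable.of_equiv _ ((lat a0).prodEquiv ⊥).symm.toEquiv

theorem isAddFundamentalDomain_latSlab {Ω : Set Pt}
    (hΩ : IsAddFundamentalDomain (lat a0) Ω volume) :
    IsAddFundamentalDomain (latSlab a0) (Ω ×ˢ (univ : Set ℝ)) volume :=
  hΩ.prod_univ volume

def e₁ : Pt × ℝ := ((1, 0), 0)

def reflect : (Pt × ℝ) ≃L[ℝ] (Pt × ℝ) :=
  ((ContinuousLinearEquiv.refl ℝ ℝ).prodCongr (ContinuousLinearEquiv.neg ℝ)).prodCongr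
    (ContinuousLinearEquiv.neg ℝ)

theorem reflect_apply (p : Pt × ℝ) : reflect p = ((p.1.1, -p.1.2), -p.2) := rfl

theorem reflect_reflect (p : Pt × ℝ) : reflect (reflect p) = p := by simp [reflect_apply]

theorem reflect_e₁ : reflect e₁ = e₁ := by simp [reflect_apply, e₁]

theorem measurePreserving_reflect : MeasurePreserving reflect volume volume :=
  ((MeasurePreserving.id volume).prod (Measure.measurePreserving_neg volume)).prod
    (Measure.measurePreserving_neg volume)

/-- The reflection `x₂ ↦ -x₂` swaps `a₁` and `a₂`. -/
theorem mk_fst_neg_snd_mem_lat {x : Pt} (hx : x ∈ lat a0) : ((x.1, -x.2) : Pt) ∈ lat a0 := by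
  obtain ⟨m, n, rfl⟩ := AddSubgroup.mem_closure_pair.1 hx
  refine AddSubgroup.mem_closure_pair.2 ⟨n, m, ?_⟩
  ext <;> simp [av1, av2]
  ring

theorem reflect_mem_latSlab_iff (p : Pt × ℝ) : reflect p ∈ latSlab a0 ↔ p ∈ latSlab a0 := by
  suffices h : ∀ p, p ∈ latSlab a0 → reflect p ∈ latSlab a0 from
    ⟨fun hp => reflect_reflect p ▸ h _ hp, h p⟩
  intro p hp
  obtain ⟨hp₁, hp₂⟩ := AddSubgroup.mem_prod.1 hp
  exact AddSubgroup.mem_prod.2 ⟨mk_fst_neg_snd_mem_lat hp₁, by simpa [reflect_apply] using hp₂⟩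

def KBloch (a0 : ℝ) (f : Pt × ℝ → ℂ) : Prop :=
  ∀ g ∈ latSlab a0, ∀ p, f (g + p) = Complex.exp (Complex.I * (dot (Kpt a0) g.1 : ℂ)) * f p

theorem _root_.KQuasiperiodic.kBloch_uncurry {Φ : Pt → ℝ → ℂ} (hΦ : KQuasiperiodic a0 Φ) :
    KBloch a0 (Function.uncurry Φ) := by
  rintro ⟨R, w⟩ hg p
  obtain ⟨hR, hw⟩ := AddSubgroup.mem_prod.1 hg
  obtain rfl : w = 0 := AddSubgroup.mem_bot.1 hw
  simpa [Function.uncurry, add_comm] using hΦ R hR p.1 p.2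

section Bloch

variable {f h : Pt × ℝ → ℂ}

theorem KBloch.fderiv_apply (hf : KBloch a0 f) (v : Pt × ℝ) :
    KBloch a0 fun p => fderiv ℝ f p v := fun g hg p => by
  simp [fderiv_add_left_eq_smul (𝕜 := ℝ) (R := ℂ) (hf g hg) p]

/-- The phase is unimodular, so it cancels in `conj f * h`. -/
theorem KBloch.conj_mul (hf : KBloch a0 f) (hh : KBloch a0 h) (g : latSlab a0) (p : Pt × ℝ) :
    starRingEnd ℂ (f (g +ᵥ p)) * h (g +ᵥ p) = starRingEnd ℂ (f p) * h p := by
  rw [AddSubgroup.vadd_def, vadd_eq_add, hf g g.2, hh g g.2, map_mul]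
  have hc := Complex.conj_mul' (Complex.exp (Complex.I * (dot (Kpt a0) (g : Pt × ℝ).1 : ℂ)))
  rw [Complex.norm_exp_I_mul_ofReal] at hc
  linear_combination (norm := (push_cast; ring)) (starRingEnd ℂ (f p) * h p) * hc

end Bloch

theorem dX1_eq_fderiv_uncurry {Φ : Pt → ℝ → ℂ} (hΦ : Differentiable ℝ (Function.uncurry Φ))
    (p : Pt × ℝ) : dX1 Φ p.1 p.2 = fderiv ℝ (Function.uncurry Φ) p e₁ :=
  fderiv_prodMk_left_apply (hΦ p) _

section Pairing

variable {Ω : Set Pt} {F₁ F₂ : Pt × ℝ → ℂ}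

theorem integral_starRingEnd_mul_fderiv_add_integral_starRingEnd_fderiv_mul
    (hΩ : IsAddFundamentalDomain (lat a0) Ω volume) (hc₁ : ContDiff ℝ 1 F₁)
    (hc₂ : ContDiff ℝ 1 F₂) (hb₁ : KBloch a0 F₁) (hb₂ : KBloch a0 F₂)
    (h₁ : MemLp F₁ 2 (volume.restrict (Ω ×ˢ univ)))
    (h₂ : MemLp F₂ 2 (volume.restrict (Ω ×ˢ univ)))
    (h₁' : MemLp (fun p => fderiv ℝ F₁ p e₁) 2 (volume.restrict (Ω ×ˢ univ)))
    (h₂' : MemLp (fun p => fderiv ℝ F₂ p e₁) 2 (volume.restrict (Ω ×ˢ univ))) :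
    (∫ p in Ω ×ˢ univ, starRingEnd ℂ (F₁ p) * fderiv ℝ F₂ p e₁) +
      ∫ p in Ω ×ˢ univ, starRingEnd ℂ (fderiv ℝ F₁ p e₁) * F₂ p = 0 := by
  have hd : ∀ p, fderiv ℝ (fun p => starRingEnd ℂ (F₁ p) * F₂ p) p e₁ =
      starRingEnd ℂ (fderiv ℝ F₁ p e₁) * F₂ p + starRingEnd ℂ (F₁ p) * fderiv ℝ F₂ p e₁ :=
    fun p => fderiv_starRingEnd_mul_apply (hc₁.differentiable one_ne_zero p)
      (hc₂.differentiable one_ne_zero p) e₁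
  have hi : Integrable (fun p => fderiv ℝ (fun p => starRingEnd ℂ (F₁ p) * F₂ p) p e₁)
      (volume.restrict (Ω ×ˢ univ)) := by
    simp_rw [hd]
    exact (h₁'.integrable_starRingEnd_mul h₂).add (h₁.integrable_starRingEnd_mul h₂')
  have h0 := (isAddFundamentalDomain_latSlab hΩ).setIntegral_fderiv_apply_eq_zero
    (F := fun p => starRingEnd ℂ (F₁ p) * F₂ p) ((Complex.conjCLE.contDiff.comp hc₁).mul hc₂)
    (hb₁.conj_mul hb₂) e₁ (h₁.integrable_starRingEnd_mul h₂) hi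
  simp_rw [hd] at h0
  rwa [integral_add (h₁'.integrable_starRingEnd_mul h₂) (h₁.integrable_starRingEnd_mul h₂'),
    add_comm] at h0

theorem integral_starRingEnd_fderiv_mul_eq_of_reflect
    (hΩ : IsAddFundamentalDomain (lat a0) Ω volume) (hb₁ : KBloch a0 F₁) (hb₂ : KBloch a0 F₂)
    {s : ℝ} (hs : s * s = 1) (hsym : ∀ p, F₂ p = s * F₁ (reflect p)) :
    ∫ p in Ω ×ˢ univ, starRingEnd ℂ (fderiv ℝ F₁ p e₁) * F₂ p =
      starRingEnd ℂ (∫ p in Ω ×ˢ univ, starRingEnd ℂ (F₁ p) * fderiv ℝ F₂ p e₁) := by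
  have hs' : (s : ℂ) * s = 1 := by exact_mod_cast hs
  have hF₁ : F₁ = (s : ℂ) • (F₂ ∘ reflect) := funext fun p => by
    simp [hsym, reflect_reflect, ← mul_assoc, hs']
  have hd₁ : ∀ p, fderiv ℝ F₁ p e₁ = s * fderiv ℝ F₂ (reflect p) e₁ := fun p => by
    rw [hF₁, fderiv_const_smul_field, Pi.smul_apply, reflect.comp_right_fderiv]
    simp [reflect_e₁]
  rw [← (isAddFundamentalDomain_latSlab hΩ).setIntegral_comp_continuousLinearEquiv_s15 reflect
    measurePreserving_reflect reflect_mem_latSlab_iff ((hb₁.fderiv_apply e₁).conj_mul hb₂),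
    ← integral_conj]
  refine integral_congr_ae (ae_of_all _ fun p => ?_)
  simp only [hd₁, hsym (reflect p), reflect_reflect, map_mul, Complex.conj_ofReal,
    Complex.conj_conj]
  linear_combination (starRingEnd ℂ (fderiv ℝ F₂ p e₁) * F₁ p) * hs'

end Pairing

end Graphene

open Graphene

theorem stmt15_general (a0 : ℝ) (Ω : Set Pt)
    (hΩ : IsAddFundamentalDomain (lat a0) Ω volume)
    (Φ₁ Φ₂ : Pt → ℝ → ℂ)
    (hΦ₁c : ContDiff ℝ 1 (fun p : Pt × ℝ => Φ₁ p.1 p.2))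
    (hΦ₂c : ContDiff ℝ 1 (fun p : Pt × ℝ => Φ₂ p.1 p.2))
    (hΦ₁q : KQuasiperiodic a0 Φ₁) (hΦ₂q : KQuasiperiodic a0 Φ₂)
    (hΦ₁2 : MemLp (fun p : Pt × ℝ => Φ₁ p.1 p.2) 2
      (volume.restrict (Ω ×ˢ (Set.univ : Set ℝ))))
    (hΦ₂2 : MemLp (fun p : Pt × ℝ => Φ₂ p.1 p.2) 2
      (volume.restrict (Ω ×ˢ (Set.univ : Set ℝ))))
    (hΦ₁d1 : MemLp (fun p : Pt × ℝ => dX1 Φ₁ p.1 p.2) 2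
      (volume.restrict (Ω ×ˢ (Set.univ : Set ℝ))))
    (hΦ₂d1 : MemLp (fun p : Pt × ℝ => dX1 Φ₂ p.1 p.2) 2
      (volume.restrict (Ω ×ˢ (Set.univ : Set ℝ))))
    (s : ℝ) (hs : s = 1 ∨ s = -1)
    (hsym : ∀ (x : Pt) (z : ℝ), Φ₂ x z = (s : ℂ) * Φ₁ (x.1, -x.2) (-z)) :
    (∫ p in Ω ×ˢ (Set.univ : Set ℝ),
        (starRingEnd ℂ) (Φ₁ p.1 p.2) * (-Complex.I * dX1 Φ₂ p.1 p.2)) =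
      (starRingEnd ℂ) (∫ p in Ω ×ˢ (Set.univ : Set ℝ),
        (starRingEnd ℂ) (Φ₁ p.1 p.2) * (-Complex.I * dX1 Φ₂ p.1 p.2)) := by
  have hd₁ := dX1_eq_fderiv_uncurry (hΦ₁c.differentiable one_ne_zero)
  have hd₂ := dX1_eq_fderiv_uncurry (hΦ₂c.differentiable one_ne_zero)
  have hsum := integral_starRingEnd_mul_fderiv_add_integral_starRingEnd_fderiv_mul
    (F₁ := Function.uncurry Φ₁) (F₂ := Function.uncurry Φ₂) hΩ hΦ₁c hΦ₂c hΦ₁q.kBloch_uncurry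
    hΦ₂q.kBloch_uncurry hΦ₁2 hΦ₂2 (by simpa only [hd₁] using hΦ₁d1)
    (by simpa only [hd₂] using hΦ₂d1)
  rw [integral_starRingEnd_fderiv_mul_eq_of_reflect hΩ hΦ₁q.kBloch_uncurry hΦ₂q.kBloch_uncurry
    (by rcases hs with rfl | rfl <;> norm_num) fun p => hsym p.1 p.2] at hsum
  simp only [hd₂, mul_left_comm _ (-Complex.I), integral_const_mul, map_mul, map_neg,
    Complex.conj_I]
  simp only [Function.uncurry_def] at hsum ⊢
  linear_combination (-Complex.I) * hsum

/-- if Φ₂(x₁,x₂,z) = s·Φ₁(x₁,−x₂,−z) for some sign s, then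
v := ∫ conj(Φ₁)(−i∂_{x₁}Φ₂) is real. -/
theorem stmt15 (a0 : ℝ) (ha0 : 0 < a0) (Ω : Set Pt)
    (hΩ : IsAddFundamentalDomain (lat a0) Ω volume)
    (Φ₁ Φ₂ : Pt → ℝ → ℂ)
    (hΦ₁c : ContDiff ℝ 1 (fun p : Pt × ℝ => Φ₁ p.1 p.2))
    (hΦ₂c : ContDiff ℝ 1 (fun p : Pt × ℝ => Φ₂ p.1 p.2))
    (hΦ₁q : KQuasiperiodic a0 Φ₁) (hΦ₂q : KQuasiperiodic a0 Φ₂)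
    (hΦ₁2 : MemLp (fun p : Pt × ℝ => Φ₁ p.1 p.2) 2
      (volume.restrict (Ω ×ˢ (Set.univ : Set ℝ))))
    (hΦ₂2 : MemLp (fun p : Pt × ℝ => Φ₂ p.1 p.2) 2
      (volume.restrict (Ω ×ˢ (Set.univ : Set ℝ))))
    (hΦ₁d1 : MemLp (fun p : Pt × ℝ => dX1 Φ₁ p.1 p.2) 2
      (volume.restrict (Ω ×ˢ (Set.univ : Set ℝ))))
    (hΦ₁d2 : MemLp (fun p : Pt × ℝ => dX2 Φ₁ p.1 p.2) 2
      (volume.restrict (Ω ×ˢ (Set.univ : Set ℝ))))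
    (hΦ₂d1 : MemLp (fun p : Pt × ℝ => dX1 Φ₂ p.1 p.2) 2
      (volume.restrict (Ω ×ˢ (Set.univ : Set ℝ))))
    (hΦ₂d2 : MemLp (fun p : Pt × ℝ => dX2 Φ₂ p.1 p.2) 2
      (volume.restrict (Ω ×ˢ (Set.univ : Set ℝ))))
    (s : ℝ) (hs : s = 1 ∨ s = -1)
    (hsym : ∀ (x : Pt) (z : ℝ), Φ₂ x z = (s : ℂ) * Φ₁ (x.1, -x.2) (-z)) :
    (∫ p in Ω ×ˢ (Set.univ : Set ℝ),
        (starRingEnd ℂ) (Φ₁ p.1 p.2) * (-Complex.I * dX1 Φ₂ p.1 p.2)) =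
      (starRingEnd ℂ) (∫ p in Ω ×ˢ (Set.univ : Set ℝ),
        (starRingEnd ℂ) (Φ₁ p.1 p.2) * (-Complex.I * dX1 Φ₂ p.1 p.2)) :=
  stmt15_general a0 Ω hΩ Φ₁ Φ₂ hΦ₁c hΦ₂c hΦ₁q hΦ₂q hΦ₁2 hΦ₂2 hΦ₁d1 hΦ₂d1 s hs hsym
end
end

section
/- Let d > 0 and let f, g : ℝ² × ℝ → ℂ be 𝕃-periodic in their first variable, given by in-plane Fourier expansions f(x, z) = Σ_{G ∈ 𝕃*} f_G(z) e^{iG·x} and g(x, z) = Σ_{G ∈ 𝕃*} g_G(z) e^{iG·x} with f_G, g_G ∈ L²(ℝ) satisfying Σ_{G ∈ 𝕃*} ‖f_G‖_{L²(ℝ)} < ∞ and Σ_{G ∈ 𝕃*} ‖g_G‖_{L²(ℝ)} < ∞. Then for every X ∈ ℝ²: ((f,g))_d^{+−}(X) = |Ω| Σ_{G ∈ 𝕃*} (∫_ℝ conj(f_G(z − d/2)) g_G(z + d/2) dz) e^{iG·(JX)}, the series converging absolutely. -/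
noncomputable section

open MeasureTheory Real Complex

/-!
The pieces `(x, z) ↦ f_G(z) e^{iG·x}` of the Fourier series of `f` lie in `L²(Ω × ℝ)` with norm
`|Ω|^{1/2} ‖f_G‖`, so the summability hypothesis makes the series converge in `L²`, and its
`L²` limit agrees almost everywhere with its pointwise limit `f`. The pairing is therefore the
`L²` inner product of two norm-convergent series. Plane waves with different `G ∈ 𝕃*` are
orthogonal on a fundamental domain: translating by the half period `π G / |G|²` flips the sign of
`e^{iG·x}` without changing its integral over `Ω`. Only the diagonal terms survive, and the shifts
by `±JX/2` and `±d/2` merely translate the coefficients and multiply them by the phases that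
combine into `e^{iG·JX}`.
-/

open Pointwise ComplexConjugate
open scoped ENNReal

theorem hasSum_inner_of_inner_eq_zero {𝕜 E ι : Type*} [RCLike 𝕜] [NormedAddCommGroup E]
    [InnerProductSpace 𝕜 E] {u v : ι → E} {U V : E} (hu : HasSum u U) (hv : HasSum v V)
    (horth : ∀ i j, i ≠ j → inner 𝕜 (u i) (v j) = 0) :
    HasSum (fun i => inner 𝕜 (u i) (v i)) (inner 𝕜 U V) := by
  have hdiag : ∀ j, inner 𝕜 U (v j) = inner 𝕜 (u j) (v j) := fun j =>
    ((innerSLFlip 𝕜 (v j)).hasSum hu).unique (hasSum_single j fun i hi => horth i j hi)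
  simpa only [innerSL_apply_apply, hdiag] using (innerSL 𝕜 U).hasSum hv

namespace MeasureTheory

theorem IsAddFundamentalDomain.measure_lt_top_of_basis
    {E ι : Type*} [NormedAddCommGroup E] [NormedSpace ℝ E] [MeasurableSpace E] [BorelSpace E]
    [Fintype ι] (b : Module.Basis ι ℝ E) {μ : Measure E} [IsFiniteMeasureOnCompacts μ]
    [μ.IsAddLeftInvariant] {Ω : Set E}
    (hΩ : IsAddFundamentalDomain (Submodule.span ℤ (Set.range b)).toAddSubgroup Ω μ) :
    μ Ω < ∞ := by
  have : FiniteDimensional ℝ E := Module.Finite.of_basis b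
  have : Countable (Submodule.span ℤ (Set.range b)).toAddSubgroup :=
    inferInstanceAs (Countable (Submodule.span ℤ (Set.range b)))
  rw [hΩ.measure_eq (ZSpan.isAddFundamentalDomain' b μ)]
  exact (ZSpan.fundamentalDomain_isBounded b).measure_lt_top

theorem IsAddFundamentalDomain.setIntegral_eq_zero_of_antiperiodic
    {α E : Type*} [AddCommGroup α] [MeasurableSpace α] [MeasurableAdd α] {μ : Measure α}
    [μ.IsAddLeftInvariant] [NormedAddCommGroup E] [NormedSpace ℝ E]
    {L : AddSubgroup α} [Countable L] {Ω : Set α} (hΩ : IsAddFundamentalDomain L Ω μ)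
    {F : α → E} (hF : ∀ R ∈ L, ∀ x, F (R + x) = F x) {t : α} (ht : Function.Antiperiodic F t) :
    ∫ x in Ω, F x ∂μ = 0 := by
  have htrans : ∫ x in t +ᵥ Ω, F x ∂μ = ∫ x in Ω, F (t + x) ∂μ := by
    rw [← Set.image_vadd]
    exact (measurePreserving_vadd t μ).setIntegral_image_emb (measurableEmbedding_const_vadd t) F Ω
  have hneg : ∫ x in Ω, F x ∂μ = -∫ x in Ω, F x ∂μ := calc
    ∫ x in Ω, F x ∂μ = ∫ x in t +ᵥ Ω, F x ∂μ :=
      hΩ.setIntegral_eq (hΩ.vadd_of_comm t) fun R x => hF R R.2 x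
    _ = ∫ x in Ω, -F x ∂μ := by
      rw [htrans]
      congr 1 with x
      rw [add_comm, ht x]
    _ = -∫ x in Ω, F x ∂μ := integral_neg _
  have : IsAddTorsionFree E := IsAddTorsionFree.of_isTorsionFree ℝ E
  exact self_eq_neg.1 hneg

variable {α β : Type*} [MeasurableSpace α] [MeasurableSpace β] {μ : Measure α} {ν : Measure β}

theorem ae_eq_tsum_toLp {E ι : Type*} [NormedAddCommGroup E] [CompleteSpace E] [Countable ι]
    {p : ℝ≥0∞} [Fact (1 ≤ p)] {Φ : ι → α → E} (hΦ : ∀ i, MemLp (Φ i) p μ)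
    (hsum : Summable fun i => ‖(hΦ i).toLp (Φ i)‖) {F : α → E}
    (hF : ∀ x, HasSum (fun i => Φ i x) (F x)) :
    F =ᵐ[μ] ⇑(∑' i, (hΦ i).toLp (Φ i)) := by
  filter_upwards [Lp.hasSum_coeFn_tsum (tsum_enorm_ne_top_iff_summable_norm.2 hsum),
    ae_all_iff.2 fun i => (hΦ i).coeFn_toLp] with x hx hΦx
  simp only [hΦx] at hx
  exact (hF x).unique hx

theorem eLpNorm_prod_mul_unimodular [SFinite ν] {p : ℝ≥0∞} (hp0 : p ≠ 0) (hp : p ≠ ∞)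
    {w : α → ℂ} (hw : ∀ x, ‖w x‖ = 1) {c : β → ℂ} (hc : AEStronglyMeasurable c ν) :
    eLpNorm (fun q : α × β => c q.2 * w q.1) p (μ.prod ν) =
      μ Set.univ ^ (1 / p.toReal) * eLpNorm c p ν := by
  have hw' : ∀ x, ‖w x‖ₑ = 1 := fun x => by rw [← ofReal_norm, hw, ENNReal.ofReal_one]
  rw [eLpNorm_eq_lintegral_rpow_enorm_toReal hp0 hp, eLpNorm_eq_lintegral_rpow_enorm_toReal hp0 hp]
  simp only [enorm_mul, hw', mul_one]
  rw [← ENNReal.mul_rpow_of_nonneg _ _ (by positivity)]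
  congr 1
  simpa using lintegral_prod_mul (μ := μ) (f := fun _ => 1) aemeasurable_const
    (hc.enorm.pow_const p.toReal)

theorem MemLp.prod_mul_unimodular [SFinite ν] [IsFiniteMeasure μ] {p : ℝ≥0∞} (hp0 : p ≠ 0)
    (hp : p ≠ ∞) {w : α → ℂ} (hwm : AEStronglyMeasurable w μ) (hw : ∀ x, ‖w x‖ = 1)
    {c : β → ℂ} (hc : MemLp c p ν) :
    MemLp (fun q : α × β => c q.2 * w q.1) p (μ.prod ν) := by
  refine ⟨(hc.1.comp_quasiMeasurePreserving Measure.quasiMeasurePreserving_snd).mul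
    (hwm.comp_quasiMeasurePreserving Measure.quasiMeasurePreserving_fst), ?_⟩
  rw [eLpNorm_prod_mul_unimodular hp0 hp hw hc.1]
  exact ENNReal.mul_lt_top (ENNReal.rpow_lt_top_of_nonneg (by positivity) (measure_ne_top μ _))
    hc.2

theorem L2.inner_toLp_prod_mul [SFinite μ] [SFinite ν] {w w' : α → ℂ} {c c' : β → ℂ}
    (h : MemLp (fun q : α × β => c q.2 * w q.1) 2 (μ.prod ν))
    (h' : MemLp (fun q : α × β => c' q.2 * w' q.1) 2 (μ.prod ν)) :
    inner ℂ (h.toLp _) (h'.toLp _) =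
      (∫ x, conj (w x) * w' x ∂μ) * ∫ z, conj (c z) * c' z ∂ν := by
  rw [L2.inner_def, ← integral_prod_mul]
  refine integral_congr_ae ?_
  filter_upwards [h.coeFn_toLp, h'.coeFn_toLp] with q hq hq'
  rw [hq, hq', RCLike.inner_apply, map_mul]
  ring

theorem volume_restrict_prod_univ {α β : Type*} [MeasureSpace α] [MeasureSpace β]
    [SFinite (volume : Measure α)] [SFinite (volume : Measure β)] (s : Set α) :
    (volume : Measure (α × β)).restrict (s ×ˢ Set.univ) = (volume.restrict s).prod volume := by
  rw [Measure.volume_eq_prod, ← Measure.prod_restrict, Measure.restrict_univ]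

end MeasureTheory

namespace GrapheneInterlayer

lemma dot_add_right (G x y : Pt) : dot G (x + y) = dot G x + dot G y := by
  simp only [dot, Prod.fst_add, Prod.snd_add]; ring

lemma dot_neg_right (G x : Pt) : dot G (-x) = -dot G x := by
  simp only [dot, Prod.fst_neg, Prod.snd_neg]; ring

lemma dot_smul_right (G : Pt) (c : ℝ) (x : Pt) : dot G (c • x) = c * dot G x := by
  simp only [dot, Prod.smul_fst, Prod.smul_snd, smul_eq_mul]; ring

lemma dot_sub_left (G G' x : Pt) : dot (G - G') x = dot G x - dot G' x := by
  simp only [dot, Prod.fst_sub, Prod.snd_sub]; ring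

lemma dot_zero_left (x : Pt) : dot 0 x = 0 := by
  simp [dot]

lemma dot_self_pos {G : Pt} (hG : G ≠ 0) : 0 < dot G G := by
  obtain ⟨a, b⟩ := G
  have hab : a ≠ 0 ∨ b ≠ 0 := by
    by_contra! h
    exact hG (Prod.ext h.1 h.2)
  simp only [dot]
  rcases hab with h | h
  · nlinarith [mul_self_pos.2 h, mul_self_nonneg b]
  · nlinarith [mul_self_pos.2 h, mul_self_nonneg a]

lemma dualVec_sub (a0 : ℝ) (m m' : ℤ × ℤ) :
    dualVec a0 (m - m') = dualVec a0 m - dualVec a0 m' := by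
  simp only [dualVec, Prod.fst_sub, Prod.snd_sub, Int.cast_sub, sub_smul]
  abel

lemma dualVec_zero (a0 : ℝ) : dualVec a0 0 = 0 := by
  simp [dualVec]

lemma dot_dualVec_av1 {a0 : ℝ} (ha0 : a0 ≠ 0) (m : ℤ × ℤ) :
    dot (dualVec a0 m) (av1 a0) = 2 * π * m.1 := by
  have hs3 : Real.sqrt 3 ≠ 0 := by positivity
  simp only [dot, dualVec, as1, as2, av1, Prod.smul_mk, Prod.mk_add_mk, smul_eq_mul]
  field_simp
  ring

lemma dot_dualVec_av2 {a0 : ℝ} (ha0 : a0 ≠ 0) (m : ℤ × ℤ) :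
    dot (dualVec a0 m) (av2 a0) = 2 * π * m.2 := by
  have hs3 : Real.sqrt 3 ≠ 0 := by positivity
  simp only [dot, dualVec, as1, as2, av2, Prod.smul_mk, Prod.mk_add_mk, smul_eq_mul]
  field_simp
  ring

lemma dualVec_ne_zero {a0 : ℝ} (ha0 : a0 ≠ 0) {m : ℤ × ℤ} (hm : m ≠ 0) : dualVec a0 m ≠ 0 := by
  intro h
  have h1 := dot_dualVec_av1 ha0 m
  have h2 := dot_dualVec_av2 ha0 m
  rw [h, dot_zero_left] at h1 h2
  have := Real.pi_pos
  exact hm (Prod.ext (by exact_mod_cast (by nlinarith : (m.1 : ℝ) = 0))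
    (by exact_mod_cast (by nlinarith : (m.2 : ℝ) = 0)))

lemma lat_eq_span (a0 : ℝ) :
    lat a0 = (Submodule.span ℤ (Set.range ![av1 a0, av2 a0])).toAddSubgroup := by
  rw [lat, ← Submodule.span_int_eq_addSubgroupClosure, Matrix.range_cons, Matrix.range_cons,
    Matrix.range_empty, Set.union_empty, Set.singleton_union]

instance (a0 : ℝ) : Countable (lat a0) := by
  rw [lat_eq_span]
  exact inferInstanceAs (Countable (Submodule.span ℤ _))

lemma linearIndependent_av {a0 : ℝ} (ha0 : a0 ≠ 0) :
    LinearIndependent ℝ ![av1 a0, av2 a0] := by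
  rw [LinearIndependent.pair_iff]
  intro s t hst
  have h1 := congrArg Prod.fst hst
  have h2 := congrArg Prod.snd hst
  simp only [av1, av2, Prod.smul_mk, Prod.mk_add_mk, smul_eq_mul, Prod.fst_zero,
    Prod.snd_zero] at h1 h2
  have hs3 : Real.sqrt 3 * a0 ≠ 0 := by positivity
  have hst1 : s + t = 0 := (mul_eq_zero.1 (by linarith : (s + t) * a0 = 0)).resolve_right ha0
  have hst2 : t - s = 0 :=
    (mul_eq_zero.1 (by linarith : (t - s) * (Real.sqrt 3 * a0) = 0)).resolve_right hs3
  constructor <;> linarith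

lemma volume_lt_top_of_isAddFundamentalDomain {a0 : ℝ} (ha0 : a0 ≠ 0) {Ω : Set Pt}
    (hΩ : IsAddFundamentalDomain (lat a0) Ω volume) : volume Ω < ∞ := by
  have hcard : Fintype.card (Fin 2) = Module.finrank ℝ Pt := by simp
  let b := basisOfLinearIndependentOfCardEqFinrank (linearIndependent_av ha0) hcard
  have hb : ⇑b = ![av1 a0, av2 a0] := coe_basisOfLinearIndependentOfCardEqFinrank _ hcard
  rw [lat_eq_span, ← hb] at hΩ
  exact hΩ.measure_lt_top_of_basis b

def planeWave (G x : Pt) : ℂ := Complex.exp (Complex.I * (dot G x : ℂ))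

lemma continuous_planeWave (G : Pt) : Continuous (planeWave G) := by
  unfold planeWave dot
  fun_prop

lemma norm_planeWave (G x : Pt) : ‖planeWave G x‖ = 1 := by
  rw [planeWave, mul_comm]
  exact Complex.norm_exp_ofReal_mul_I _

lemma planeWave_add_right (G x y : Pt) : planeWave G (x + y) = planeWave G x * planeWave G y := by
  simp only [planeWave, dot_add_right, Complex.ofReal_add, mul_add, Complex.exp_add]

lemma conj_planeWave (G x : Pt) : conj (planeWave G x) = planeWave G (-x) := by
  rw [planeWave, planeWave, ← Complex.exp_conj, map_mul, Complex.conj_I, Complex.conj_ofReal,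
    dot_neg_right, Complex.ofReal_neg, neg_mul, mul_neg]

lemma planeWave_sub_left (G G' x : Pt) :
    planeWave (G - G') x = conj (planeWave G' x) * planeWave G x := by
  rw [conj_planeWave]
  simp only [planeWave, ← Complex.exp_add, dot_sub_left, dot_neg_right]
  congr 1
  push_cast
  ring

lemma planeWave_sub_right (G x y : Pt) :
    planeWave G (x - y) = conj (planeWave G y) * planeWave G x := by
  rw [sub_eq_add_neg, planeWave_add_right, conj_planeWave, mul_comm]

lemma planeWave_zero_left (x : Pt) : planeWave 0 x = 1 := by
  simp [planeWave, dot_zero_left]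

lemma planeWave_antiperiodic {G : Pt} (hG : G ≠ 0) :
    Function.Antiperiodic (planeWave G) ((π / dot G G) • G) := by
  intro x
  have hπ : dot G ((π / dot G G) • G) = π := by
    rw [dot_smul_right, div_mul_cancel₀ _ (dot_self_pos hG).ne']
  have hhalf : planeWave G ((π / dot G G) • G) = -1 := by
    rw [planeWave, hπ, mul_comm, Complex.exp_pi_mul_I]
  rw [planeWave_add_right, hhalf, mul_neg_one]

lemma planeWave_dualVec_eq_one {a0 : ℝ} (ha0 : a0 ≠ 0) (m : ℤ × ℤ) {R : Pt} (hR : R ∈ lat a0) :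
    planeWave (dualVec a0 m) R = 1 := by
  have hgen : ∀ k : ℤ, Complex.exp (Complex.I * ((2 * π * k : ℝ) : ℂ)) = 1 := fun k => by
    rw [← Complex.exp_int_mul_two_pi_mul_I k]
    push_cast
    ring_nf
  induction hR using AddSubgroup.closure_induction with
  | mem R hR =>
    rcases hR with rfl | rfl
    · rw [planeWave, dot_dualVec_av1 ha0, hgen]
    · rw [planeWave, dot_dualVec_av2 ha0, hgen]
  | zero => simp [planeWave, dot]
  | add R R' _ _ hR hR' => rw [planeWave_add_right, hR, hR', one_mul]
  | neg R _ hR => rw [← conj_planeWave, hR, map_one]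

lemma setIntegral_planeWave_dualVec {a0 : ℝ} (ha0 : a0 ≠ 0) {Ω : Set Pt}
    (hΩ : IsAddFundamentalDomain (lat a0) Ω volume) {m : ℤ × ℤ} (hm : m ≠ 0) :
    ∫ x in Ω, planeWave (dualVec a0 m) x = 0 :=
  hΩ.setIntegral_eq_zero_of_antiperiodic
    (fun R hR x => by rw [planeWave_add_right, planeWave_dualVec_eq_one ha0 m hR, one_mul])
    (planeWave_antiperiodic (dualVec_ne_zero ha0 hm))

theorem hasSum_setIntegral_conj_mul {a0 : ℝ} (ha0 : a0 ≠ 0) {Ω : Set Pt}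
    (hΩ : IsAddFundamentalDomain (lat a0) Ω volume) {F G : Pt → ℝ → ℂ}
    {fc gc : ℤ × ℤ → ℝ → ℂ} (hfc : ∀ m, MemLp (fc m) 2) (hgc : ∀ m, MemLp (gc m) 2)
    (hfcs : Summable fun m => (eLpNorm (fc m) 2 volume).toReal)
    (hgcs : Summable fun m => (eLpNorm (gc m) 2 volume).toReal)
    (hF : ∀ x z, HasSum (fun m => fc m z * planeWave (dualVec a0 m) x) (F x z))
    (hG : ∀ x z, HasSum (fun m => gc m z * planeWave (dualVec a0 m) x) (G x z)) :
    HasSum (fun m => ((volume Ω).toReal : ℂ) * ∫ z, conj (fc m z) * gc m z)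
      (∫ q in Ω ×ˢ Set.univ, conj (F q.1 q.2) * G q.1 q.2) := by
  have : IsFiniteMeasure (volume.restrict Ω) :=
    isFiniteMeasure_restrict.2 (volume_lt_top_of_isAddFundamentalDomain ha0 hΩ).ne
  have hmode {c : ℝ → ℂ} (hc : MemLp c 2) (m : ℤ × ℤ) :
      MemLp (fun q : Pt × ℝ => c q.2 * planeWave (dualVec a0 m) q.1) 2
        ((volume.restrict Ω).prod volume) :=
    hc.prod_mul_unimodular two_ne_zero ENNReal.ofNat_ne_top
      (continuous_planeWave _).aestronglyMeasurable (norm_planeWave _)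
  have hsummable {c : ℤ × ℤ → ℝ → ℂ} (hc : ∀ m, MemLp (c m) 2)
      (hcs : Summable fun m => (eLpNorm (c m) 2 volume).toReal) :
      Summable fun m => ‖(hmode (hc m) m).toLp _‖ := by
    simp only [Lp.norm_toLp, eLpNorm_prod_mul_unimodular two_ne_zero ENNReal.ofNat_ne_top
      (norm_planeWave _) (hc _).1, ENNReal.toReal_mul]
    exact hcs.mul_left _
  have hinner (m m' : ℤ × ℤ) :
      inner ℂ ((hmode (hfc m) m).toLp _) ((hmode (hgc m') m').toLp _) =
        (∫ x in Ω, planeWave (dualVec a0 (m' - m)) x) * ∫ z, conj (fc m z) * gc m' z := by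
    simp only [L2.inner_toLp_prod_mul, dualVec_sub, planeWave_sub_left]
  have hsum := hasSum_inner_of_inner_eq_zero (hsummable hfc hfcs).of_norm.hasSum
    (hsummable hgc hgcs).of_norm.hasSum fun m m' hne => by
      rw [hinner, setIntegral_planeWave_dualVec ha0 hΩ (sub_ne_zero.2 hne.symm), zero_mul]
  have hval : ∫ q in Ω ×ˢ Set.univ, conj (F q.1 q.2) * G q.1 q.2 =
      inner ℂ (∑' m, (hmode (hfc m) m).toLp _) (∑' m, (hmode (hgc m) m).toLp _) := by
    rw [L2.inner_def, volume_restrict_prod_univ]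
    refine integral_congr_ae ?_
    filter_upwards [ae_eq_tsum_toLp _ (hsummable hfc hfcs) fun q => hF q.1 q.2,
      ae_eq_tsum_toLp _ (hsummable hgc hgcs) fun q => hG q.1 q.2] with q hFq hGq
    rw [← hFq, ← hGq, RCLike.inner_apply, mul_comm]
  rw [hval]
  refine hsum.congr_fun fun m => ?_
  simp [hinner, dualVec_zero, planeWave_zero_left, Measure.real]

lemma hasSum_planeWave_translate {ι : Type*} {G : ι → Pt} {c : ι → ℝ → ℂ} {f : Pt → ℝ → ℂ}
    (hf : ∀ x z, HasSum (fun i => c i z * planeWave (G i) x) (f x z)) (v : Pt) (s : ℝ)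
    (x : Pt) (z : ℝ) :
    HasSum (fun i => planeWave (G i) (-v) * c i (z - s) * planeWave (G i) x)
      (f (x - v) (z - s)) := by
  convert hf (x - v) (z - s) using 2 with i
  rw [sub_eq_add_neg x, planeWave_add_right]
  ring

lemma memLp_const_mul_comp_sub {p : ℝ≥0∞} {c : ℝ → ℂ} (hc : MemLp c p) (a : ℂ) (s : ℝ) :
    MemLp (fun z => a * c (z - s)) p :=
  (hc.comp_measurePreserving (measurePreserving_sub_right volume s)).const_mul a

lemma eLpNorm_const_mul_comp_sub {p : ℝ≥0∞} {c : ℝ → ℂ} (hc : AEStronglyMeasurable c volume)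
    {a : ℂ} (ha : ‖a‖ = 1) (s : ℝ) :
    eLpNorm (fun z => a * c (z - s)) p volume = eLpNorm c p volume := by
  rw [show (fun z => a * c (z - s)) = a • (c ∘ (· - s)) from rfl, eLpNorm_const_smul,
    eLpNorm_comp_measurePreserving hc (measurePreserving_sub_right volume s), ← ofReal_norm, ha,
    ENNReal.ofReal_one, one_mul]

theorem hasSum_bra {a0 : ℝ} (ha0 : a0 ≠ 0) {Ω : Set Pt}
    (hΩ : IsAddFundamentalDomain (lat a0) Ω volume) {f g : Pt → ℝ → ℂ}
    {fc gc : ℤ × ℤ → ℝ → ℂ} (hfc : ∀ m, MemLp (fc m) 2) (hgc : ∀ m, MemLp (gc m) 2)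
    (hfcs : Summable fun m => (eLpNorm (fc m) 2 volume).toReal)
    (hgcs : Summable fun m => (eLpNorm (gc m) 2 volume).toReal)
    (hf : ∀ x z, HasSum (fun m => fc m z * planeWave (dualVec a0 m) x) (f x z))
    (hg : ∀ x z, HasSum (fun m => gc m z * planeWave (dualVec a0 m) x) (g x z))
    (d η η' : ℝ) (X : Pt) :
    HasSum (fun m => ((volume Ω).toReal : ℂ) *
        (∫ z, conj (fc m (z - η * d / 2)) * gc m (z - η' * d / 2)) *
        planeWave (dualVec a0 m) ((η / 2) • Jmat X - (η' / 2) • Jmat X))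
      (bra d Ω η η' f g X) := by
  set v := (η / 2) • Jmat X
  set v' := (η' / 2) • Jmat X
  have hnorm {c : ℤ × ℤ → ℝ → ℂ} (hc : ∀ m, MemLp (c m) 2) (w : Pt) (s : ℝ)
      (hcs : Summable fun m => (eLpNorm (c m) 2 volume).toReal) :
      Summable fun m =>
        (eLpNorm (fun z => planeWave (dualVec a0 m) (-w) * c m (z - s)) 2 volume).toReal := by
    simpa only [eLpNorm_const_mul_comp_sub (hc _).1 (norm_planeWave _ _)] using hcs
  have h := hasSum_setIntegral_conj_mul ha0 hΩ
    (fun m => memLp_const_mul_comp_sub (hfc m) _ (η * d / 2))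
    (fun m => memLp_const_mul_comp_sub (hgc m) _ (η' * d / 2))
    (hnorm hfc v _ hfcs) (hnorm hgc v' _ hgcs)
    (hasSum_planeWave_translate hf v _) (hasSum_planeWave_translate hg v' _)
  have hbra : bra d Ω η η' f g X = ∫ q in Ω ×ˢ Set.univ,
      conj (f (q.1 - v) (q.2 - η * d / 2)) * g (q.1 - v') (q.2 - η' * d / 2) := rfl
  rw [hbra]
  refine h.congr_fun fun m => ?_
  rw [mul_assoc, ← integral_mul_const]
  congr 2 with z
  rw [map_mul, conj_planeWave, neg_neg, planeWave_sub_right, conj_planeWave]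
  ring

end GrapheneInterlayer

open GrapheneInterlayer in
theorem stmt19_general (a0 d : ℝ) (ha0 : 0 < a0) (Ω : Set Pt)
    (hΩ : IsAddFundamentalDomain (lat a0) Ω volume)
    (f g : Pt → ℝ → ℂ) (fc gc : ℤ × ℤ → ℝ → ℂ)
    (hfc2 : ∀ m, MemLp (fc m) 2 (volume : Measure ℝ))
    (hgc2 : ∀ m, MemLp (gc m) 2 (volume : Measure ℝ))
    (hfcs : Summable (fun m : ℤ × ℤ => (eLpNorm (fc m) 2 volume).toReal))
    (hgcs : Summable (fun m : ℤ × ℤ => (eLpNorm (gc m) 2 volume).toReal))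
    (hfexp : ∀ (x : Pt) (z : ℝ), HasSum
      (fun m : ℤ × ℤ => fc m z * Complex.exp (Complex.I * (dot (dualVec a0 m) x : ℂ)))
      (f x z))
    (hgexp : ∀ (x : Pt) (z : ℝ), HasSum
      (fun m : ℤ × ℤ => gc m z * Complex.exp (Complex.I * (dot (dualVec a0 m) x : ℂ)))
      (g x z)) :
    ∀ X : Pt,
      Summable (fun m : ℤ × ℤ =>
        ‖(((volume Ω).toReal : ℝ) : ℂ) *
            (∫ z : ℝ, (starRingEnd ℂ) (fc m (z - d / 2)) * gc m (z + d / 2)) *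
            Complex.exp (Complex.I * (dot (dualVec a0 m) (Jmat X) : ℂ))‖) ∧
      HasSum (fun m : ℤ × ℤ =>
          (((volume Ω).toReal : ℝ) : ℂ) *
            (∫ z : ℝ, (starRingEnd ℂ) (fc m (z - d / 2)) * gc m (z + d / 2)) *
            Complex.exp (Complex.I * (dot (dualVec a0 m) (Jmat X) : ℂ)))
        (bra d Ω 1 (-1) f g X) := by
  intro X
  have hshift : (1 / 2 : ℝ) • Jmat X - (-1 / 2 : ℝ) • Jmat X = Jmat X := by
    rw [← sub_smul]; norm_num
  have hsum := hasSum_bra ha0.ne' hΩ hfc2 hgc2 hfcs hgcs hfexp hgexp d 1 (-1) X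
  rw [hshift] at hsum
  simp only [one_mul, neg_one_mul, neg_div, sub_neg_eq_add] at hsum
  exact ⟨summable_norm_iff.2 hsum.summable, hsum⟩

/-- Fourier representation of the interlayer pairing:
((f,g))_d^{+−}(X) = |Ω| Σ_{G∈𝕃*} (∫ conj(f_G(z−d/2)) g_G(z+d/2) dz) e^{iG·(JX)},
with the series converging absolutely. -/
theorem stmt19 (a0 d : ℝ) (ha0 : 0 < a0) (hd : 0 < d) (Ω : Set Pt)
    (hΩ : IsAddFundamentalDomain (lat a0) Ω volume)
    (f g : Pt → ℝ → ℂ) (fc gc : ℤ × ℤ → ℝ → ℂ)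
    (hfper : LPeriodic a0 f) (hgper : LPeriodic a0 g)
    (hfc2 : ∀ m, MemLp (fc m) 2 (volume : Measure ℝ))
    (hgc2 : ∀ m, MemLp (gc m) 2 (volume : Measure ℝ))
    (hfcs : Summable (fun m : ℤ × ℤ => (eLpNorm (fc m) 2 volume).toReal))
    (hgcs : Summable (fun m : ℤ × ℤ => (eLpNorm (gc m) 2 volume).toReal))
    (hfexp : ∀ (x : Pt) (z : ℝ), HasSum
      (fun m : ℤ × ℤ => fc m z * Complex.exp (Complex.I * (dot (dualVec a0 m) x : ℂ)))
      (f x z))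
    (hgexp : ∀ (x : Pt) (z : ℝ), HasSum
      (fun m : ℤ × ℤ => gc m z * Complex.exp (Complex.I * (dot (dualVec a0 m) x : ℂ)))
      (g x z)) :
    ∀ X : Pt,
      Summable (fun m : ℤ × ℤ =>
        ‖(((volume Ω).toReal : ℝ) : ℂ) *
            (∫ z : ℝ, (starRingEnd ℂ) (fc m (z - d / 2)) * gc m (z + d / 2)) *
            Complex.exp (Complex.I * (dot (dualVec a0 m) (Jmat X) : ℂ))‖) ∧
      HasSum (fun m : ℤ × ℤ =>
          (((volume Ω).toReal : ℝ) : ℂ) *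
            (∫ z : ℝ, (starRingEnd ℂ) (fc m (z - d / 2)) * gc m (z + d / 2)) *
            Complex.exp (Complex.I * (dot (dualVec a0 m) (Jmat X) : ℂ)))
        (bra d Ω 1 (-1) f g X) :=
  stmt19_general a0 d ha0 Ω hΩ f g fc gc hfc2 hgc2 hfcs hgcs hfexp hgexp
end
end
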